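/- arXiv:1410.1349 — 9 statements merged into one kernel-verified Lean document; each statement's English description precedes it below -/
import Mathlib

section
/- Let X ≠ {0} be an F-space (complete metrizable topological vector space) and T a continuous linear operator on X. Then there is no vector x ∈ X such that for every non-empty open set U ⊆ X, the set N(x,U) = {n ∈ ℕ : Tⁿx ∈ U} has upper Banach density equal to 1. -/
/-!
If every return-time set `N(x, U)` has upper Banach density `1`, then each of them contains two
consecutive integers, since a set with no two consecutive elements has upper Banach density at
most `1/2`. So every non-empty open `U` meets `T⁻¹ U`. This fails for a set `U ∋ z` with
`T U ∩ U = ∅`, which exists by Hausdorffness as soon as `T z ≠ z`; and if `T` is the identity the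
orbit of `x` never enters `{x}ᶜ`.
-/

open Filter

noncomputable def upperCount (A : Set ℕ) (s : ℕ) : ℝ :=
  limsup (fun k : ℕ => ((A ∩ Set.Icc (k + 1) (k + s)).ncard : ℝ)) atTop

noncomputable def upperBanachDensity (A : Set ℕ) : ℝ :=
  limsup (fun s : ℕ => upperCount A s / s) atTop

section Density

variable {A : Set ℕ}

theorem two_mul_ncard_inter_Icc_le (hA : ∀ n ∈ A, n + 1 ∉ A) (k s : ℕ) :
    2 * (A ∩ Set.Icc (k + 1) (k + s)).ncard ≤ s + 1 := by
  set B := A ∩ Set.Icc (k + 1) (k + s)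
  have hB : B.Finite := (Set.finite_Icc _ _).subset Set.inter_subset_right
  have hdisj : Disjoint B ((· + 1) '' B) := by
    rw [Set.disjoint_left]
    rintro _ hn ⟨m, hm, rfl⟩
    exact hA m hm.1 hn.1
  have hsub : B ∪ (· + 1) '' B ⊆ Set.Icc (k + 1) (k + s + 1) := by
    rintro n (⟨-, hn⟩ | ⟨m, ⟨-, hm⟩, rfl⟩) <;> simp only [Set.mem_Icc] at * <;> omega
  calc 2 * B.ncard = (B ∪ (· + 1) '' B).ncard := by
        rw [Set.ncard_union_eq hdisj hB (hB.image _),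
          Set.ncard_image_of_injective _ (add_left_injective 1), two_mul]
    _ ≤ (Set.Icc (k + 1) (k + s + 1)).ncard := Set.ncard_le_ncard hsub (Set.finite_Icc _ _)
    _ = s + 1 := by rw [Set.ncard_Icc_nat]; omega

theorem upperCount_le_of_forall_succ_notMem (hA : ∀ n ∈ A, n + 1 ∉ A) (s : ℕ) :
    upperCount A s ≤ (s + 1) / 2 := by
  have hwindow (k : ℕ) : ((A ∩ Set.Icc (k + 1) (k + s)).ncard : ℝ) ≤ (s + 1) / 2 := by
    have := two_mul_ncard_inter_Icc_le hA k s
    rw [le_div_iff₀ two_pos]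
    exact_mod_cast (mul_comm _ _).trans_le this
  exact limsup_le_of_le (isCoboundedUnder_le_of_le atTop fun _ => by positivity)
    (Eventually.of_forall hwindow)

theorem upperCount_nonneg (s : ℕ) : 0 ≤ upperCount A s := by
  have hwindow (k : ℕ) : ((A ∩ Set.Icc (k + 1) (k + s)).ncard : ℝ) ≤ s := by
    have := Set.ncard_le_ncard (Set.inter_subset_right (s := A)) (Set.finite_Icc (k + 1) (k + s))
    rw [Set.ncard_Icc_nat] at this
    exact_mod_cast this.trans_eq (by omega)
  exact le_limsup_of_frequently_le (Frequently.of_forall fun _ => by positivity)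
    (isBoundedUnder_of ⟨s, hwindow⟩)

theorem upperBanachDensity_le_half_of_forall_succ_notMem (hA : ∀ n ∈ A, n + 1 ∉ A) :
    upperBanachDensity A ≤ 1 / 2 := by
  have hlim : Tendsto (fun s : ℕ => 1 / 2 + 1 / 2 * (1 / (s : ℝ))) atTop (nhds (1 / 2)) := by
    simpa only [mul_zero, add_zero] using
      (tendsto_one_div_atTop_nhds_zero_nat.const_mul (1 / 2 : ℝ)).const_add (1 / 2 : ℝ)
  rw [upperBanachDensity, ← hlim.limsup_eq]
  refine limsup_le_limsup ?_
    (isCoboundedUnder_le_of_le atTop fun s => div_nonneg (upperCount_nonneg s) s.cast_nonneg)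
    hlim.isBoundedUnder_le
  filter_upwards [eventually_ge_atTop 1] with s hs
  have hs : (0 : ℝ) < s := by exact_mod_cast hs
  calc upperCount A s / s ≤ ((s + 1) / 2) / s := by
        gcongr; exact upperCount_le_of_forall_succ_notMem hA s
    _ = 1 / 2 + 1 / 2 * (1 / s) := by field_simp

theorem exists_mem_and_succ_mem_of_upperBanachDensity_eq_one (hA : upperBanachDensity A = 1) :
    ∃ n ∈ A, n + 1 ∈ A := by
  by_contra! h
  have := upperBanachDensity_le_half_of_forall_succ_notMem h
  linarith

end Density

theorem exists_isOpen_mapsTo_compl_of_apply_ne {X : Type*} [TopologicalSpace X] [T2Space X]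
    {f : X → X} (hf : Continuous f) {z : X} (hz : f z ≠ z) :
    ∃ U : Set X, IsOpen U ∧ U.Nonempty ∧ Set.MapsTo f U Uᶜ := by
  obtain ⟨W, V, hW, hV, hfzW, hzV, hWV⟩ := t2_separation hz
  exact ⟨V ∩ f ⁻¹' W, hV.inter (hW.preimage hf), ⟨z, hzV, hfzW⟩,
    fun y hy hfy => hWV.notMem_of_mem_left hy.2 hfy.1⟩

theorem subsingleton_of_forall_exists_iterate_mem_and_iterate_succ_mem {X : Type*}
    [TopologicalSpace X] [T2Space X] {f : X → X} (hf : Continuous f) {x : X}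
    (h : ∀ U : Set X, IsOpen U → U.Nonempty → ∃ n, f^[n] x ∈ U ∧ f^[n + 1] x ∈ U) :
    Subsingleton X := by
  by_cases hid : ∀ y, f y = y
  · refine ⟨fun y₁ y₂ => ?_⟩
    have hx (y : X) : y = x := by
      by_contra hy
      obtain ⟨n, hn, -⟩ := h {x}ᶜ isOpen_compl_singleton ⟨y, hy⟩
      exact hn (Function.iterate_fixed (hid x) n)
    rw [hx y₁, hx y₂]
  · push Not at hid
    obtain ⟨z, hz⟩ := hid
    obtain ⟨U, hU, hUne, hfU⟩ := exists_isOpen_mapsTo_compl_of_apply_ne hf hz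
    obtain ⟨n, hn, hn₁⟩ := h U hU hUne
    rw [Function.iterate_succ_apply'] at hn₁
    exact absurd hn₁ (hfU hn)

theorem no_orbit_with_thick_return_sets_general {X : Type*} [AddCommGroup X] [Module ℝ X]
    [UniformSpace X] [TopologicalSpace.MetrizableSpace X] [Nontrivial X]
    (T : X →L[ℝ] X) :
    ¬ ∃ x : X, ∀ U : Set X, IsOpen U → U.Nonempty →
        upperBanachDensity {n : ℕ | (T ^ n) x ∈ U} = 1 := by
  rintro ⟨x, hx⟩
  have hconsec (U : Set X) (hU : IsOpen U) (hUne : U.Nonempty) :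
      ∃ n, (⇑T)^[n] x ∈ U ∧ (⇑T)^[n + 1] x ∈ U := by
    obtain ⟨n, hn, hn₁⟩ := exists_mem_and_succ_mem_of_upperBanachDensity_eq_one (hx U hU hUne)
    exact ⟨n, by rwa [← pow_apply_eq_iterate], by rwa [← pow_apply_eq_iterate]⟩
  exact not_subsingleton X
    (subsingleton_of_forall_exists_iterate_mem_and_iterate_succ_mem T.continuous hconsec)

/-- On a non-zero F-space, no operator has a vector all of whose return-time sets to
non-empty open sets have upper Banach density `1`. -/
theorem no_orbit_with_thick_return_sets {X : Type*} [AddCommGroup X] [Module ℝ X]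
    [UniformSpace X] [IsUniformAddGroup X] [ContinuousSMul ℝ X] [CompleteSpace X]
    [TopologicalSpace.MetrizableSpace X] [Nontrivial X]
    (T : X →L[ℝ] X) :
    ¬ ∃ x : X, ∀ U : Set X, IsOpen U → U.Nonempty →
        upperBanachDensity {n : ℕ | (T ^ n) x ∈ U} = 1 :=
  no_orbit_with_thick_return_sets_general T
end

section
/- Let X ≠ {0} be an F-space and T a continuous linear operator on X. Then there is no vector x ∈ X such that for every non-empty open set U ⊆ X, the set N(x,U) = {n ∈ ℕ : Tⁿx ∈ U} has positive lower Banach density. -/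
/-!
A set of positive lower Banach density has bounded gaps. If every return set of `x` had bounded
gaps, separate `x` from the fixed point `0` by disjoint open sets `U ∋ x` and `V ∋ 0`, and let
`m` bound the gaps of `N(x, U)`. By continuity some open `W ∋ 0` stays in `V` for `m` steps;
the orbit enters `W` at some time `n`, so it avoids `U` at times `n + 1, …, n + m`.
Hence `x = 0`, whose orbit never meets the non-empty open set `{0}ᶜ`.
-/

open Filter Topology

noncomputable def lowerCount (A : Set ℕ) (s : ℕ) : ℝ :=
  liminf (fun k : ℕ => ((A ∩ Set.Icc (k + 1) (k + s)).ncard : ℝ)) atTop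

noncomputable def lowerBanachDensity (A : Set ℕ) : ℝ :=
  liminf (fun s : ℕ => lowerCount A s / s) atTop

def IsSyndetic (A : Set ℕ) : Prop :=
  ∃ m : ℕ, ∀ n : ℕ, (A ∩ Set.Icc (n + 1) (n + m)).Nonempty

lemma lowerCount_eq_zero_of_frequently_eq_empty {A : Set ℕ} {s : ℕ}
    (h : ∃ᶠ k in atTop, A ∩ Set.Icc (k + 1) (k + s) = ∅) :
    lowerCount A s = 0 := by
  have h_nonneg : ∀ k : ℕ, (0 : ℝ) ≤ (A ∩ Set.Icc (k + 1) (k + s)).ncard :=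
    fun _ => Nat.cast_nonneg _
  have h_le : ∀ k : ℕ, ((A ∩ Set.Icc (k + 1) (k + s)).ncard : ℝ) ≤ s := fun k => by
    have := Set.ncard_le_ncard (Set.inter_subset_right (s := A)) (Set.finite_Icc (k + 1) (k + s))
    rw [Set.ncard_Icc_nat] at this
    exact_mod_cast this.trans (by omega)
  refine le_antisymm (liminf_le_of_frequently_le ?_ (isBoundedUnder_of ⟨0, h_nonneg⟩)) ?_
  · exact h.mono fun k hk => by simp [hk]
  · exact le_liminf_of_le (isBoundedUnder_of ⟨(s : ℝ), h_le⟩).isCoboundedUnder_ge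
      (Eventually.of_forall h_nonneg)

lemma lowerBanachDensity_eq_zero_of_not_isSyndetic {A : Set ℕ} (hA : ¬ IsSyndetic A) :
    lowerBanachDensity A = 0 := by
  simp only [IsSyndetic, not_exists, not_forall, Set.not_nonempty_iff_eq_empty] at hA
  have h_count : ∀ s : ℕ, lowerCount A s = 0 := fun s => by
    refine lowerCount_eq_zero_of_frequently_eq_empty (frequently_atTop.2 fun K => ?_)
    obtain ⟨n, hn⟩ := hA (K + s)
    refine ⟨n + K, Nat.le_add_left K n, Set.subset_empty_iff.1 (hn ▸ ?_)⟩
    exact Set.inter_subset_inter_right A (Set.Icc_subset_Icc (by omega) (by omega))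
  simp [lowerBanachDensity, h_count]

lemma isSyndetic_of_lowerBanachDensity_pos {A : Set ℕ} (hA : 0 < lowerBanachDensity A) :
    IsSyndetic A := by
  by_contra h
  exact hA.ne' (lowerBanachDensity_eq_zero_of_not_isSyndetic h)

lemma eq_of_forall_isSyndetic_returns {X : Type*} [TopologicalSpace X] [T2Space X]
    {f : X → X} (hf : Continuous f) {p x : X} (hp : f p = p)
    (hx : ∀ U : Set X, IsOpen U → U.Nonempty → IsSyndetic {n | f^[n] x ∈ U}) :
    x = p := by
  by_contra hxp
  obtain ⟨U, V, hU, hV, hxU, hpV, hUV⟩ := t2_separation hxp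
  obtain ⟨m, hm⟩ := hx U hU ⟨x, hxU⟩
  have h_stay : ∀ᶠ y in 𝓝 p, ∀ j ∈ Finset.range (m + 1), f^[j] y ∈ V := by
    refine (Finset.range (m + 1)).eventually_all.2 fun j _ => ?_
    have hcont := (hf.iterate j).continuousAt (x := p)
    rw [ContinuousAt, Function.iterate_fixed hp] at hcont
    exact hcont (hV.mem_nhds hpV)
  obtain ⟨W, hW_stay, hW, hpW⟩ := eventually_nhds_iff.1 h_stay
  obtain ⟨m', hm'⟩ := hx W hW ⟨p, hpW⟩
  obtain ⟨n, hnW, -⟩ := hm' 0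
  obtain ⟨j, hjU, hj⟩ := hm n
  rw [Set.mem_Icc] at hj
  have hjV : f^[j] x ∈ V := by
    have := hW_stay _ hnW (j - n) (Finset.mem_range.2 (by omega))
    rwa [← Function.iterate_add_apply, Nat.sub_add_cancel (by omega)] at this
  exact Set.disjoint_left.1 hUV hjU hjV

theorem no_orbit_with_syndetic_return_sets_general {X : Type*} [AddCommGroup X] [Module ℝ X]
    [UniformSpace X] [TopologicalSpace.MetrizableSpace X] [Nontrivial X]
    (T : X →L[ℝ] X) :
    ¬ ∃ x : X, ∀ U : Set X, IsOpen U → U.Nonempty →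
        0 < lowerBanachDensity {n : ℕ | (T ^ n) x ∈ U} := by
  rintro ⟨x, hx⟩
  have h_syndetic : ∀ U : Set X, IsOpen U → U.Nonempty → IsSyndetic {n | (⇑T)^[n] x ∈ U} :=
    fun U hU hne => by
      simpa only [FunLike.coe_pow_eq_iterate] using
        isSyndetic_of_lowerBanachDensity_pos (hx U hU hne)
  have hx0 : x = 0 := eq_of_forall_isSyndetic_returns T.continuous (map_zero T) h_syndetic
  obtain ⟨m, hm⟩ := h_syndetic {0}ᶜ isOpen_compl_singleton (exists_ne 0)
  obtain ⟨j, hj, -⟩ := hm 0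
  simp [hx0, Function.iterate_fixed (map_zero T)] at hj

/-- On a non-zero F-space, no operator has a vector all of whose return-time sets to
non-empty open sets have positive lower Banach density. -/
theorem no_orbit_with_syndetic_return_sets {X : Type*} [AddCommGroup X] [Module ℝ X]
    [UniformSpace X] [IsUniformAddGroup X] [ContinuousSMul ℝ X] [CompleteSpace X]
    [TopologicalSpace.MetrizableSpace X] [Nontrivial X]
    (T : X →L[ℝ] X) :
    ¬ ∃ x : X, ∀ U : Set X, IsOpen U → U.Nonempty →
        0 < lowerBanachDensity {n : ℕ | (T ^ n) x ∈ U} :=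
  no_orbit_with_syndetic_return_sets_general T
end

section
/- Let A ⊆ ℤ be syndetic with gap bound M (i.e., every interval of M consecutive integers meets A), and let (α_n)_{n∈ℤ} be non-negative reals such that for some C > 0 and some N ∈ ℤ ∪ {+∞}, α_n ≥ C·α_{n−1} for all n < N and α_n = 0 for all n ≥ N. Then Σ_{n∈A} α_n ≥ (min(1, C^M)/M) · Σ_{n < N−M} α_n. In particular, if Σ_{n∈ℤ} α_n = +∞ then Σ_{n∈A} α_n = +∞. -/
/-!
For each `n` with `n + M < N` pick `a ∈ A ∩ [n, n + M)`. Iterating `α m ≥ C α (m - 1)` at most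
`M` times gives `α a ≥ min 1 (C ^ M) · α n`, and each `a` is picked for at most `M` values of `n`,
so `min 1 (C ^ M) · ∑_{n + M < N} α n ≤ M · ∑_{a ∈ A} α a`. Divergence transfers because the
indices with `n + M ≥ N` and `α n ≠ 0` lie in the finite window `[N - M, N)`.
-/

def SyndeticZWith (M : ℕ) (A : Set ℤ) : Prop :=
  ∀ n : ℤ, ∃ a ∈ A, n ≤ a ∧ a < n + M

open Finset Function
open scoped ENNReal

section Growth

variable {R : Type*} [Semiring R] [LinearOrder R] [IsStrictOrderedRing R]

theorem min_one_pow_le_pow {C : R} (hC : 0 ≤ C) {j M : ℕ} (hj : j ≤ M) :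
    min 1 (C ^ M) ≤ C ^ j := by
  rcases le_total C 1 with hC1 | hC1
  · exact (min_le_right _ _).trans (pow_le_pow_of_le_one hC hC1 hj)
  · exact (min_le_left _ _).trans (one_le_pow₀ hC1)

variable {α : ℤ → R} {C : R} {N : WithTop ℤ}

theorem pow_mul_le_of_mul_le_succ (hC : 0 ≤ C)
    (hgrow : ∀ n : ℤ, (n : WithTop ℤ) < N → C * α (n - 1) ≤ α n) (n : ℤ) (k : ℕ)
    (hk : ((n + k : ℤ) : WithTop ℤ) < N) : C ^ k * α n ≤ α (n + k) := by
  induction k with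
  | zero => simp
  | succ k ih =>
    have hk' : ((n + k : ℤ) : WithTop ℤ) < N :=
      lt_of_le_of_lt (WithTop.coe_le_coe.2 (by omega)) hk
    have hstep := hgrow _ hk
    rw [show n + ((k + 1 : ℕ) : ℤ) - 1 = n + k by push_cast; ring] at hstep
    calc C ^ (k + 1) * α n = C * (C ^ k * α n) := by rw [pow_succ', mul_assoc]
      _ ≤ C * α (n + k) := mul_le_mul_of_nonneg_left (ih hk') hC
      _ ≤ α (n + (k + 1 : ℕ)) := hstep

theorem min_one_pow_mul_le_of_mul_le_succ (hC : 0 ≤ C) (hα : ∀ n, 0 ≤ α n)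
    (hgrow : ∀ n : ℤ, (n : WithTop ℤ) < N → C * α (n - 1) ≤ α n) {M : ℕ} {n a : ℤ}
    (hna : n ≤ a) (han : a ≤ n + M) (haN : (a : WithTop ℤ) < N) :
    min 1 (C ^ M) * α n ≤ α a := by
  obtain ⟨j, rfl⟩ : ∃ j : ℕ, a = n + j := ⟨(a - n).toNat, by omega⟩
  calc min 1 (C ^ M) * α n ≤ C ^ j * α n :=
        mul_le_mul_of_nonneg_right (min_one_pow_le_pow hC (by omega)) (hα n)
    _ ≤ α (n + j) := pow_mul_le_of_mul_le_succ hC hgrow n j haN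

end Growth

theorem tsum_sum_range_add (f : ℤ → ℝ≥0∞) (M : ℕ) :
    ∑' n, ∑ j ∈ range M, f (n + j) = M * ∑' m, f m := by
  have hshift (j : ℕ) : ∑' n : ℤ, f (n + j) = ∑' m, f m := (Equiv.addRight (j : ℤ)).tsum_eq f
  rw [Summable.tsum_finsetSum fun _ _ => ENNReal.summable]
  simp only [hshift, sum_const, card_range, nsmul_eq_mul]

theorem tsum_subtype_le_mul_tsum_of_exists {f w : ℤ → ℝ≥0∞} {p : ℤ → Prop} {A : Set ℤ} {M : ℕ}
    (h : ∀ n, p n → ∃ a ∈ A, n ≤ a ∧ a < n + M ∧ w n ≤ f a) :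
    ∑' n : {n // p n}, w n ≤ M * ∑' a : A, f a := by
  have hw : ∀ n, p n → w n ≤ ∑ j ∈ range M, A.indicator f (n + j) := by
    intro n hn
    obtain ⟨a, haA, hna, han, hwa⟩ := h n hn
    obtain ⟨j, rfl⟩ : ∃ j : ℕ, a = n + j := ⟨(a - n).toNat, by omega⟩
    have hj : j ∈ range M := mem_range.2 (by omega)
    calc w n ≤ A.indicator f (n + j) := by rwa [Set.indicator_of_mem haA]
      _ ≤ _ := single_le_sum (f := fun j : ℕ => A.indicator f (n + j)) (fun _ _ => zero_le) hj
  calc ∑' n : {n // p n}, w n ≤ ∑' n : {n // p n}, ∑ j ∈ range M, A.indicator f (n + j) :=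
        ENNReal.tsum_le_tsum fun n => hw n n.2
    _ ≤ ∑' n, ∑ j ∈ range M, A.indicator f (n + j) :=
        ENNReal.tsum_comp_le_tsum_of_injective Subtype.val_injective _
    _ = M * ∑' a : A, f a := by rw [tsum_sum_range_add, _root_.tsum_subtype]

theorem tsum_subtype_eq_top_of_support_subset_union {β : Type*} {f : β → ℝ≥0∞} {s : Set β}
    {t : Finset β} (hft : ∀ b ∈ t, f b ≠ ∞) (hst : support f ⊆ s ∪ t) (h : ∑' b, f b = ∞) :
    ∑' b : s, f b = ∞ := by
  by_contra hs
  have hle : ∑' b, f b ≤ ∑' b : s, f b + ∑ b ∈ t, f b :=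
    calc ∑' b, f b = ∑' b : ↑(s ∪ t), f b := (tsum_subtype_eq_of_support_subset hst).symm
      _ ≤ ∑' b : s, f b + ∑' b : (t : Set β), f b := ENNReal.tsum_union_le f s t
      _ = ∑' b : s, f b + ∑ b ∈ t, f b := by rw [Finset.tsum_subtype']
  refine (hle.trans_lt (ENNReal.add_lt_top.2 ⟨lt_top_iff_ne_top.2 hs, ?_⟩)).ne h
  exact ENNReal.sum_lt_top.2 fun b hb => lt_top_iff_ne_top.2 (hft b hb)

theorem exists_finset_support_subset {β : Type*} [Zero β] {α : ℤ → β} {N : WithTop ℤ}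
    (hzero : ∀ n : ℤ, N ≤ n → α n = 0) (M : ℕ) :
    ∃ t : Finset ℤ, support α ⊆ {n : ℤ | ((n + M : ℤ) : WithTop ℤ) < N} ∪ t := by
  cases N with
  | top => exact ⟨∅, fun n _ => Or.inl (WithTop.coe_lt_top _)⟩
  | coe N =>
    refine ⟨Ico (N - M) N, fun n hn => ?_⟩
    have hnN : n < N := by
      by_contra! h
      exact hn (hzero n (WithTop.coe_le_coe.2 h))
    by_cases hs : n + M < N
    · exact Or.inl (WithTop.coe_lt_coe.2 hs)
    · exact Or.inr (by simp only [coe_Ico, Set.mem_Ico]; omega)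

theorem ENNReal.div_mul_le_of_mul_le_mul {a b x y : ℝ≥0∞} (hb₀ : b ≠ 0) (hb : b ≠ ∞)
    (h : a * x ≤ b * y) : a / b * x ≤ y :=
  calc a / b * x = b⁻¹ * (a * x) := by rw [ENNReal.div_eq_inv_mul, mul_assoc]
    _ ≤ b⁻¹ * (b * y) := by gcongr
    _ = y := ENNReal.inv_mul_cancel_left hb₀ hb

/-- Lower bound for the sum of a "geometrically controlled" non-negative sequence
over a syndetic set, and the divergence consequence. -/
theorem syndetic_sum_lower_bound (A : Set ℤ) (M : ℕ) (hM : 0 < M)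
    (hA : SyndeticZWith M A)
    (α : ℤ → ℝ) (hnn : ∀ n, 0 ≤ α n) (C : ℝ) (hC : 0 < C) (N : WithTop ℤ)
    (hgrow : ∀ n : ℤ, (n : WithTop ℤ) < N → C * α (n - 1) ≤ α n)
    (hzero : ∀ n : ℤ, N ≤ (n : WithTop ℤ) → α n = 0) :
    ENNReal.ofReal (min 1 (C ^ M) / M) *
        (∑' n : {n : ℤ // ((n + M : ℤ) : WithTop ℤ) < N}, ENNReal.ofReal (α n)) ≤
      (∑' a : A, ENNReal.ofReal (α a)) ∧
    ((∑' n : ℤ, ENNReal.ofReal (α n)) = ⊤ → (∑' a : A, ENNReal.ofReal (α a)) = ⊤) := by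
  set c := min 1 (C ^ M)
  have hc : 0 < c := lt_min one_pos (pow_pos hC M)
  have hcount : ENNReal.ofReal c * ∑' n : {n : ℤ // ((n + M : ℤ) : WithTop ℤ) < N},
      ENNReal.ofReal (α n) ≤ M * ∑' a : A, ENNReal.ofReal (α a) := by
    rw [← ENNReal.tsum_mul_left]
    refine tsum_subtype_le_mul_tsum_of_exists
      (w := fun n => ENNReal.ofReal c * ENNReal.ofReal (α n)) (f := fun n => ENNReal.ofReal (α n))
      fun n hn => ?_
    obtain ⟨a, haA, hna, han⟩ := hA n
    refine ⟨a, haA, hna, han, ?_⟩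
    rw [← ENNReal.ofReal_mul hc.le]
    exact ENNReal.ofReal_le_ofReal <| min_one_pow_mul_le_of_mul_le_succ hC.le hnn hgrow hna
      han.le (lt_of_le_of_lt (WithTop.coe_le_coe.2 han.le) hn)
  have hbound : ENNReal.ofReal (c / M) * ∑' n : {n : ℤ // ((n + M : ℤ) : WithTop ℤ) < N},
      ENNReal.ofReal (α n) ≤ ∑' a : A, ENNReal.ofReal (α a) := by
    rw [ENNReal.ofReal_div_of_pos (by exact_mod_cast hM), ENNReal.ofReal_natCast]
    exact ENNReal.div_mul_le_of_mul_le_mul (by exact_mod_cast hM.ne') (ENNReal.natCast_ne_top M)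
      hcount
  refine ⟨hbound, fun htop => ?_⟩
  obtain ⟨t, ht⟩ := exists_finset_support_subset hzero M
  have hs_top : ∑' n : {n : ℤ // ((n + M : ℤ) : WithTop ℤ) < N}, ENNReal.ofReal (α n) = ∞ :=
    tsum_subtype_eq_top_of_support_subset_union (fun _ _ => ENNReal.ofReal_ne_top)
      ((support_comp_subset ENNReal.ofReal_zero α).trans ht) htop
  have hcM : ENNReal.ofReal (c / M) ≠ 0 := (ENNReal.ofReal_pos.2 (by positivity)).ne'
  rwa [hs_top, ENNReal.mul_top hcM, top_le_iff] at hbound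
end

section
/- Let (X, B, μ, T) be a measure-preserving system, A ∈ B, and ε > 0. Then the set {n ∈ ℤ : μ(A ∩ T^{−n}A) > μ(A)² − ε} is syndetic. -/
/-!
For sets `B₁, …, B_N` of measure `α` in a probability space, Cauchy–Schwarz applied to
`∑ᵢ 𝟙_{Bᵢ}` gives `∑_{i,j} μ(Bᵢ ∩ Bⱼ) ≥ (Nα)²`; since the diagonal only contributes `Nα`, some
`i ≠ j` has `μ(Bᵢ ∩ Bⱼ) > α² - ε` as soon as `(N - 1)ε > 1`. Applied to `Bᵢ = T^{-nᵢ}A`, this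
shows that among any `N` integers two differ by an element of the (symmetric) set of return
times `S`. If `S` had arbitrarily long gaps, one could build `N` integers whose pairwise
differences all avoid `S`, adding each new one in the middle of a gap.
-/

/-- A set `S ⊆ ℤ` is syndetic: it has bounded gaps. -/
def SyndeticZ (S : Set ℤ) : Prop :=
  ∃ M : ℕ, 0 < M ∧ ∀ n : ℤ, ∃ s ∈ S, n ≤ s ∧ s < n + M

open MeasureTheory ProbabilityTheory

section Combinatorics

variable {S : Set ℤ}

theorem exists_forall_ne_sub_notMem_of_forall_gap (hS : ∀ s ∈ S, -s ∈ S)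
    (hgap : ∀ M : ℕ, 0 < M → ∃ a : ℤ, ∀ s ∈ S, a ≤ s → a + M ≤ s) (N : ℕ) :
    ∃ n : Fin N → ℤ, ∀ i j, i ≠ j → n j - n i ∉ S := by
  induction N with
  | zero => exact ⟨Fin.elim0, fun i => i.elim0⟩
  | succ N ih =>
    obtain ⟨n, hn⟩ := ih
    set C : ℕ := ∑ i, (n i).natAbs
    have hC : ∀ i, |n i| ≤ C := fun i => by
      rw [← Int.natCast_natAbs]
      exact_mod_cast Finset.single_le_sum (f := fun j => (n j).natAbs) (fun j _ => Nat.zero_le _)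
        (Finset.mem_univ i)
    obtain ⟨a, ha⟩ := hgap (2 * C + 1) (by omega)
    have hnew : ∀ i, a + C - n i ∉ S := fun i hs => by
      have := ha _ hs (by linarith [(abs_le.mp (hC i)).2])
      push_cast at this
      linarith [(abs_le.mp (hC i)).1]
    refine ⟨Fin.snoc n (a + C), fun i j hij => ?_⟩
    induction j using Fin.lastCases with
    | last =>
      induction i using Fin.lastCases with
      | last => exact absurd rfl hij
      | cast i => simpa only [Fin.snoc_last, Fin.snoc_castSucc] using hnew i
    | cast j =>
      induction i using Fin.lastCases with
      | last =>
        simp only [Fin.snoc_last, Fin.snoc_castSucc]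
        exact fun hs => hnew j (by simpa using hS _ hs)
      | cast i => simpa only [Fin.snoc_castSucc] using hn i j (fun h => hij (h ▸ rfl))

theorem syndeticZ_of_forall_exists_ne_sub_mem (hS : ∀ s ∈ S, -s ∈ S) (N : ℕ)
    (h : ∀ n : Fin N → ℤ, ∃ i j, i ≠ j ∧ n j - n i ∈ S) : SyndeticZ S := by
  by_contra hsyn
  simp only [SyndeticZ, not_exists, not_and, not_forall, not_lt] at hsyn
  obtain ⟨n, hn⟩ := exists_forall_ne_sub_notMem_of_forall_gap hS hsyn N
  obtain ⟨i, j, hij, hmem⟩ := h n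
  exact hn i j hij hmem

end Combinatorics

section Intersections

variable {X ι : Type*} [MeasurableSpace X] {μ : Measure X} [IsProbabilityMeasure μ] [Fintype ι]
  {B : ι → Set X}

theorem sq_sum_measureReal_le_sum_sum_measureReal_inter (hB : ∀ i, MeasurableSet (B i)) :
    (∑ i, μ.real (B i)) ^ 2 ≤ ∑ i, ∑ j, μ.real (B i ∩ B j) := by
  set f : X → ℝ := fun x => ∑ i, (B i).indicator 1 x
  have hf : MemLp f 2 μ :=
    memLp_finsetSum _ fun i _ => (memLp_const (1 : ℝ) : MemLp (1 : X → ℝ) 2 μ).indicator (hB i)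
  have hf_int : μ[f] = ∑ i, μ.real (B i) := by
    rw [integral_finsetSum _ fun i _ => (integrable_const 1).indicator (hB i)]
    simp only [integral_indicator_one (hB _)]
  have hf_sq : μ[f ^ 2] = ∑ i, ∑ j, μ.real (B i ∩ B j) := by
    have : f ^ 2 = fun x => ∑ i, ∑ j, (B i ∩ B j).indicator 1 x := by
      ext x
      simp only [f, Pi.pow_apply, sq, Finset.sum_mul_sum, Set.inter_indicator_one, Pi.mul_apply]
    rw [this, integral_finsetSum _ fun i _ => integrable_finsetSum _ fun j _ =>
      (integrable_const 1).indicator ((hB i).inter (hB j))]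
    refine Finset.sum_congr rfl fun i _ => ?_
    rw [integral_finsetSum _ fun j _ => (integrable_const 1).indicator ((hB i).inter (hB j))]
    simp only [integral_indicator_one ((hB i).inter (hB _))]
  have hvar := variance_nonneg f μ
  rw [variance_eq_sub hf, hf_int, hf_sq] at hvar
  linarith

theorem exists_ne_measureReal_inter_gt (hB : ∀ i, MeasurableSet (B i)) {α ε : ℝ}
    (hBα : ∀ i, μ.real (B i) = α) (hε : 0 < ε) (hcard : 1 < ((Fintype.card ι : ℝ) - 1) * ε) :
    ∃ i j, i ≠ j ∧ α ^ 2 - ε < μ.real (B i ∩ B j) := by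
  classical
  by_contra! hle
  set N : ℝ := (Fintype.card ι : ℝ)
  have hrow : ∀ i, ∑ j, μ.real (B i ∩ B j) ≤ α + (N - 1) * (α ^ 2 - ε) := by
    intro i
    rw [← Finset.add_sum_erase _ _ (Finset.mem_univ i), Set.inter_self, hBα]
    have := Finset.sum_le_card_nsmul (Finset.univ.erase i) _ _ fun j hj =>
      hle i j (Finset.ne_of_mem_erase hj).symm
    rw [Finset.card_erase_of_mem (Finset.mem_univ i), Finset.card_univ, nsmul_eq_mul,
      Nat.cast_pred (Fintype.card_pos_iff.mpr ⟨i⟩)] at this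
    linarith
  have hsum := (sq_sum_measureReal_le_sum_sum_measureReal_inter (μ := μ) hB).trans
    (Finset.sum_le_sum fun i _ => hrow i)
  simp only [hBα, Finset.sum_const, Finset.card_univ, nsmul_eq_mul] at hsum
  -- `(Nα)² ≤ N(α + (N - 1)(α² - ε))` forces `(N - 1)ε ≤ α - α² ≤ 1/4`
  nlinarith [sq_nonneg (2 * α - 1)]

end Intersections

section Shifts

variable {X : Type*} [MeasurableSpace X] {μ : Measure X} {T : X ≃ᵐ X}

theorem MeasureTheory.MeasurePreserving.perm_zpow (hT : MeasurePreserving T μ μ) (n : ℤ) :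
    MeasurePreserving ⇑(T.toEquiv ^ n) μ μ := by
  obtain ⟨k, rfl | rfl⟩ := n.eq_nat_or_neg
  · rw [zpow_natCast, ← Equiv.Perm.iterate_eq_pow]
    exact hT.iterate k
  · rw [zpow_neg, zpow_natCast, ← inv_pow, ← Equiv.Perm.iterate_eq_pow]
    exact (hT.symm T).iterate k

theorem measureReal_preimage_zpow_inter_preimage_zpow (hT : MeasurePreserving T μ μ)
    {A : Set X} (hA : MeasurableSet A) (a b : ℤ) :
    μ.real (⇑(T.toEquiv ^ a) ⁻¹' A ∩ ⇑(T.toEquiv ^ b) ⁻¹' A)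
      = μ.real (A ∩ ⇑(T.toEquiv ^ (b - a)) ⁻¹' A) := by
  have hcomp : ⇑(T.toEquiv ^ b) = ⇑(T.toEquiv ^ (b - a)) ∘ ⇑(T.toEquiv ^ a) := by
    rw [← Equiv.Perm.coe_mul, ← zpow_add, sub_add_cancel]
  rw [hcomp, Set.preimage_comp, ← Set.preimage_inter]
  exact (hT.perm_zpow a).measureReal_preimage
    (hA.inter ((hT.perm_zpow (b - a)).measurable hA)).nullMeasurableSet

theorem measureReal_inter_preimage_zpow_neg (hT : MeasurePreserving T μ μ) {A : Set X}
    (hA : MeasurableSet A) (n : ℤ) :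
    μ.real (A ∩ ⇑(T.toEquiv ^ (-n)) ⁻¹' A) = μ.real (A ∩ ⇑(T.toEquiv ^ n) ⁻¹' A) := by
  have := measureReal_preimage_zpow_inter_preimage_zpow hT hA n 0
  rw [zero_sub, zpow_zero, Equiv.Perm.coe_one, Set.preimage_id, Set.inter_comm] at this
  exact this.symm

end Shifts

/-- Khintchine–Bergelson: in an invertible measure-preserving system, for any measurable
`A` and `ε > 0`, the set `{n ∈ ℤ : μ(A ∩ T⁻ⁿA) > μ(A)² − ε}` is syndetic. -/
theorem khintchine_bergelson_syndetic {X : Type*} [MeasurableSpace X]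
    (μ : MeasureTheory.Measure X) [MeasureTheory.IsProbabilityMeasure μ]
    (T : X ≃ᵐ X) (hT : MeasureTheory.MeasurePreserving T μ μ)
    (A : Set X) (hA : MeasurableSet A) (ε : ℝ) (hε : 0 < ε) :
    SyndeticZ {n : ℤ | (μ A).toReal ^ 2 - ε <
      (μ (A ∩ ((T.toEquiv ^ n : Equiv.Perm X) : X → X) ⁻¹' A)).toReal} := by
  simp only [← measureReal_def]
  refine syndeticZ_of_forall_exists_ne_sub_mem
    (fun s hs => by rwa [Set.mem_ofPred_eq, measureReal_inter_preimage_zpow_neg hT hA])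
    (⌈ε⁻¹⌉₊ + 2) fun n => ?_
  have hcard : 1 < ((Fintype.card (Fin (⌈ε⁻¹⌉₊ + 2)) : ℝ) - 1) * ε := by
    rw [Fintype.card_fin]
    push_cast
    nlinarith [Nat.le_ceil ε⁻¹, mul_inv_cancel₀ hε.ne']
  obtain ⟨i, j, hij, hlt⟩ := exists_ne_measureReal_inter_gt (μ := μ)
    (fun i => (hT.perm_zpow (n i)).measurable hA)
    (fun i => (hT.perm_zpow (n i)).measureReal_preimage hA.nullMeasurableSet) hε hcard
  exact ⟨i, j, hij, by rwa [measureReal_preimage_zpow_inter_preimage_zpow hT hA] at hlt⟩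
end

section
/- Let A ⊆ ℤ have positive upper Banach density δ, let ε ∈ (0,1), and for k ∈ ℤ set B_k = A ∩ (A − k) and δ_k = the upper Banach density of B_k. Then the set {k ∈ ℤ : δ_k > δ² − ε} is syndetic. -/
open Filter

/-- Upper Banach density of a set of integers. -/
noncomputable def upperBanachDensityZ (A : Set ℤ) : ℝ :=
  limsup (fun s : ℕ =>
    sSup {x : ℝ | ∃ k : ℤ, x = ((A ∩ Set.Icc (k + 1) (k + s)).ncard : ℝ)} / s) atTop

open Filter Finset

open scoped Classical in
/-- count of `A` in the window `(k, k+s]`, as a `Finset` card. -/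
noncomputable def cntZ (A : Set ℤ) (s : ℕ) (k : ℤ) : ℕ :=
  ((Finset.Icc (k + 1) (k + (s : ℤ))).filter (fun x => x ∈ A)).card

lemma ncard_eq_cntZ (A : Set ℤ) (s : ℕ) (k : ℤ) :
    (A ∩ Set.Icc (k + 1) (k + (s : ℤ))).ncard = cntZ A s k := by
  classical
  rw [cntZ, ← Set.ncard_coe_finset]
  congr 1
  ext x
  simp only [Finset.coe_filter, Finset.mem_Icc, Set.mem_setOf_eq, Set.mem_inter_iff,
    Set.mem_Icc]
  tauto

lemma cntZ_le (A : Set ℤ) (s : ℕ) (k : ℤ) : cntZ A s k ≤ s := by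
  classical
  calc cntZ A s k ≤ (Finset.Icc (k + 1) (k + (s : ℤ))).card := Finset.card_filter_le _ _
  _ = s := by rw [Int.card_Icc]; omega

/-- the set of window counts -/
def VZ (A : Set ℤ) (s : ℕ) : Set ℝ := {x : ℝ | ∃ k : ℤ, x = (cntZ A s k : ℝ)}

lemma VZ_nonempty (A : Set ℤ) (s : ℕ) : (VZ A s).Nonempty := ⟨_, 0, rfl⟩

lemma VZ_finite (A : Set ℤ) (s : ℕ) : (VZ A s).Finite := by
  apply Set.Finite.subset ((Set.finite_Iic s).image (fun n : ℕ => (n : ℝ)))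
  rintro x ⟨k, rfl⟩
  exact ⟨cntZ A s k, cntZ_le A s k, rfl⟩

noncomputable def WZ (A : Set ℤ) (s : ℕ) : ℝ := sSup (VZ A s)

lemma WZ_mem (A : Set ℤ) (s : ℕ) : WZ A s ∈ VZ A s :=
  (VZ_nonempty A s).csSup_mem (VZ_finite A s)

lemma WZ_nonneg (A : Set ℤ) (s : ℕ) : 0 ≤ WZ A s := by
  obtain ⟨k, hk⟩ := WZ_mem A s
  rw [hk]; positivity

lemma WZ_le (A : Set ℤ) (s : ℕ) : WZ A s ≤ s := by
  obtain ⟨k, hk⟩ := WZ_mem A s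
  rw [hk]; exact_mod_cast cntZ_le A s k

lemma cntZ_le_WZ (A : Set ℤ) (s : ℕ) (k : ℤ) : (cntZ A s k : ℝ) ≤ WZ A s :=
  le_csSup ((VZ_finite A s).bddAbove) ⟨k, rfl⟩

lemma upperBanachDensityZ_eq (A : Set ℤ) :
    upperBanachDensityZ A = limsup (fun s : ℕ => WZ A s / s) atTop := by
  unfold upperBanachDensityZ WZ VZ
  congr 1
  funext s
  congr 2
  ext x
  exact exists_congr (fun k => by rw [ncard_eq_cntZ])

lemma WZ_div_nonneg (A : Set ℤ) (s : ℕ) : 0 ≤ WZ A s / s :=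
  div_nonneg (WZ_nonneg A s) (by positivity)

lemma WZ_div_le_one (A : Set ℤ) (s : ℕ) : WZ A s / s ≤ 1 := by
  rcases Nat.eq_zero_or_pos s with h | h
  · subst h; simp
  · rw [div_le_one (by exact_mod_cast h)]
    exact WZ_le A s

lemma ubd_bddAbove (A : Set ℤ) :
    IsBoundedUnder (· ≤ ·) atTop (fun s : ℕ => WZ A s / s) :=
  isBoundedUnder_of ⟨1, WZ_div_le_one A⟩

lemma ubd_bddBelow (A : Set ℤ) :
    IsBoundedUnder (· ≥ ·) atTop (fun s : ℕ => WZ A s / s) :=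
  isBoundedUnder_of ⟨0, WZ_div_nonneg A⟩

lemma ubd_nonneg (A : Set ℤ) : 0 ≤ upperBanachDensityZ A := by
  rw [upperBanachDensityZ_eq]
  exact le_limsup_of_frequently_le
    (Frequently.of_forall (WZ_div_nonneg A)) (ubd_bddAbove A)

lemma ubd_le_one (A : Set ℤ) : upperBanachDensityZ A ≤ 1 := by
  rw [upperBanachDensityZ_eq]
  exact limsup_le_of_le ((ubd_bddBelow A).isCoboundedUnder_le)
    (Eventually.of_forall (WZ_div_le_one A))

/-- Extraction (upper): if the density is `< r`, then eventually all window counts are `< r*s`. -/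
lemma eventually_cnt_lt (A : Set ℤ) {r : ℝ} (h : upperBanachDensityZ A < r) :
    ∀ᶠ s : ℕ in atTop, ∀ k : ℤ, (cntZ A s k : ℝ) < r * s := by
  rw [upperBanachDensityZ_eq] at h
  have h2 := eventually_lt_of_limsup_lt h (ubd_bddAbove A)
  filter_upwards [h2, eventually_ge_atTop 1] with s hs hs1 k
  have hspos : (0:ℝ) < s := by exact_mod_cast hs1
  calc (cntZ A s k : ℝ) ≤ WZ A s := cntZ_le_WZ A s k
  _ < r * s := by rw [div_lt_iff₀ hspos] at hs; exact hs

/-- Extraction (lower): frequently some window has count `> r*s`. -/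
lemma frequently_cnt_gt (A : Set ℤ) {r : ℝ} (h : r < upperBanachDensityZ A) :
    ∃ᶠ s : ℕ in atTop, ∃ k : ℤ, r * s < (cntZ A s k : ℝ) := by
  rw [upperBanachDensityZ_eq] at h
  have h2 := frequently_lt_of_lt_limsup ((ubd_bddBelow A).isCoboundedUnder_le) h
  rw [frequently_atTop] at h2 ⊢
  intro a
  obtain ⟨s, hsa, hs⟩ := h2 (max a 1)
  refine ⟨s, le_trans (le_max_left _ _) hsa, ?_⟩
  have hspos : (0:ℝ) < s := by
    have : 1 ≤ s := le_trans (le_max_right _ _) hsa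
    exact_mod_cast this
  obtain ⟨k, hk⟩ := WZ_mem A s
  exact ⟨k, by rw [← hk, ← lt_div_iff₀ hspos] ; exact hs⟩

open scoped Classical in
lemma card_filter_shift (P : ℤ → Prop) (a b y : ℤ) :
    ((Finset.Icc a b).filter (fun x => P (x + y))).card
      = ((Finset.Icc (a + y) (b + y)).filter (fun x => P x)).card := by
  apply Finset.card_bij (fun x _ => x + y)
  · intro x hx
    simp only [Finset.mem_filter, Finset.mem_Icc] at hx ⊢
    exact ⟨⟨by omega, by omega⟩, hx.2⟩
  · intro x _ x' _ h; omega
  · intro u hu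
    simp only [Finset.mem_filter, Finset.mem_Icc] at hu
    refine ⟨u - y, ?_, by omega⟩
    simp only [Finset.mem_filter, Finset.mem_Icc, sub_add_cancel]
    exact ⟨⟨by omega, by omega⟩, hu.2⟩

open scoped Classical in
lemma card_Icc_sdiff_le (a b y : ℤ) :
    ((Finset.Icc a b) \ (Finset.Icc (a + y) (b + y))).card ≤ y.natAbs := by
  rcases le_or_gt 0 y with hy | hy
  · calc ((Finset.Icc a b) \ (Finset.Icc (a + y) (b + y))).card
        ≤ (Finset.Icc a (a + y - 1)).card := by
          apply Finset.card_le_card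
          intro x hx
          simp only [Finset.mem_sdiff, Finset.mem_Icc] at hx ⊢
          omega
    _ ≤ y.natAbs := by rw [Int.card_Icc]; omega
  · calc ((Finset.Icc a b) \ (Finset.Icc (a + y) (b + y))).card
        ≤ (Finset.Icc (b + y + 1) b).card := by
          apply Finset.card_le_card
          intro x hx
          simp only [Finset.mem_sdiff, Finset.mem_Icc] at hx ⊢
          omega
    _ ≤ y.natAbs := by rw [Int.card_Icc]; omega

open scoped Classical in
lemma card_filter_mono_shift (A : Set ℤ) (a b y : ℤ) :
    ((Finset.Icc a b).filter (fun x => x ∈ A)).card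
      ≤ ((Finset.Icc (a + y) (b + y)).filter (fun x => x ∈ A)).card + y.natAbs := by
  calc ((Finset.Icc a b).filter (fun x => x ∈ A)).card
      ≤ (((Finset.Icc a b).filter (fun x => x ∈ A))
          \ ((Finset.Icc (a + y) (b + y)).filter (fun x => x ∈ A))).card
        + ((Finset.Icc (a + y) (b + y)).filter (fun x => x ∈ A)).card :=
        Finset.card_le_card_sdiff_add_card
  _ ≤ y.natAbs + ((Finset.Icc (a + y) (b + y)).filter (fun x => x ∈ A)).card := by
      gcongr
      refine le_trans (Finset.card_le_card ?_) (card_Icc_sdiff_le a b y)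
      intro x hx
      simp only [Finset.mem_sdiff, Finset.mem_filter] at hx ⊢
      exact ⟨hx.1.1, fun hc => hx.2 ⟨hc, hx.1.2⟩⟩
  _ = _ := by omega

lemma exists_avoid {S : Set ℤ} (hns : ¬ SyndeticZ S) (F : Finset ℤ) (hF : F.Nonempty) :
    ∃ x : ℤ, ∀ y ∈ F, x - y ∉ S := by
  unfold SyndeticZ at hns
  push_neg at hns
  have hmm : F.min' hF ≤ F.max' hF := F.min'_le (F.max' hF) (F.max'_mem hF)
  obtain ⟨n, hn⟩ := hns ((F.max' hF - F.min' hF).toNat + 1) (Nat.succ_pos _)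
  refine ⟨n + F.max' hF, fun y hy hmem => ?_⟩
  have h1 : F.min' hF ≤ y := F.min'_le y hy
  have h2 : y ≤ F.max' hF := F.le_max' y hy
  have hb := hn _ hmem (by omega)
  have ht : ((F.max' hF - F.min' hF).toNat : ℤ) = F.max' hF - F.min' hF :=
    Int.toNat_of_nonneg (by omega)
  push_cast at hb
  omega

lemma exists_good_finset {S : Set ℤ} (hns : ¬ SyndeticZ S) (h0 : (0:ℤ) ∈ S) (N : ℕ) :
    ∃ G : Finset ℤ, G.card = N + 1 ∧
      ∀ y ∈ G, ∀ z ∈ G, y ≠ z → (z - y ∉ S ∨ y - z ∉ S) := by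
  induction N with
  | zero => exact ⟨{0}, rfl, by simp⟩
  | succ n ih =>
    obtain ⟨G, hcard, hprop⟩ := ih
    have hne : G.Nonempty := Finset.card_pos.mp (by omega)
    obtain ⟨x, hx⟩ := exists_avoid hns G hne
    have hxG : x ∉ G := fun hc => (hx x hc) (by simpa using h0)
    refine ⟨insert x G, by rw [Finset.card_insert_of_notMem hxG, hcard], ?_⟩
    intro y hy z hz hyz
    rcases Finset.mem_insert.mp hy with rfl | hyG
    · rcases Finset.mem_insert.mp hz with rfl | hzG
      · exact absurd rfl hyz
      · exact Or.inr (hx z hzG)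
    · rcases Finset.mem_insert.mp hz with rfl | hzG
      · exact Or.inl (hx y hyG)
      · exact hprop y hyG z hzG hyz

open scoped Classical in
lemma cntZ_shift_ge (A : Set ℤ) (s : ℕ) (k y : ℤ) :
    (cntZ A s k : ℝ) ≤ (cntZ A s (k + y) : ℝ) + y.natAbs := by
  have h := card_filter_mono_shift A (k + 1) (k + (s:ℤ)) y
  have he : Finset.Icc (k + 1 + y) (k + (s:ℤ) + y) = Finset.Icc ((k+y) + 1) ((k+y) + (s:ℤ)) := by
    congr 1 <;> ring
  rw [he] at h
  unfold cntZ
  exact_mod_cast h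

open scoped Classical in
lemma cnt_pair_eq (A : Set ℤ) (s : ℕ) (k y z : ℤ) :
    ((Finset.Icc (k + 1) (k + (s:ℤ))).filter (fun x => x + y ∈ A ∧ x + z ∈ A)).card
      = cntZ (A ∩ {a : ℤ | a + (z - y) ∈ A}) s (k + y) := by
  have h1 : ∀ x : ℤ, (x + y ∈ A ∧ x + z ∈ A) ↔ (x + y) ∈ (A ∩ {a : ℤ | a + (z - y) ∈ A}) := by
    intro x
    simp only [Set.mem_inter_iff, Set.mem_setOf_eq]
    constructor
    · rintro ⟨h, h'⟩; exact ⟨h, by rw [show x + y + (z - y) = x + z by ring]; exact h'⟩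
    · rintro ⟨h, h'⟩; exact ⟨h, by rw [show x + y + (z - y) = x + z by ring] at h'; exact h'⟩
  have h2 := card_filter_shift (fun u => u ∈ (A ∩ {a : ℤ | a + (z - y) ∈ A})) (k+1) (k+(s:ℤ)) y
  have he : Finset.Icc (k + 1 + y) (k + (s:ℤ) + y) = Finset.Icc ((k+y) + 1) ((k+y) + (s:ℤ)) := by
    congr 1 <;> ring
  rw [he] at h2
  rw [cntZ, ← h2]
  apply Finset.card_bij (fun x _ => x)
  · intro x hx
    simp only [Finset.mem_filter] at hx ⊢
    exact ⟨hx.1, (h1 x).mp hx.2⟩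
  · intro x x' _ _ h; exact h
  · intro x hx
    simp only [Finset.mem_filter] at hx
    exact ⟨x, Finset.mem_filter.mpr ⟨hx.1, (h1 x).mpr hx.2⟩, rfl⟩


open scoped Classical in
lemma cnt_single_eq (A : Set ℤ) (s : ℕ) (k y : ℤ) :
    ((Finset.Icc (k + 1) (k + (s:ℤ))).filter (fun x => x + y ∈ A)).card = cntZ A s (k + y) := by
  have h2 := card_filter_shift (fun u => u ∈ A) (k+1) (k+(s:ℤ)) y
  have he : Finset.Icc (k + 1 + y) (k + (s:ℤ) + y) = Finset.Icc ((k+y) + 1) ((k+y) + (s:ℤ)) := by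
    congr 1 <;> ring
  rw [he] at h2
  rw [cntZ, ← h2]

private lemma myIteMulIte (p q : Prop) [Decidable p] [Decidable q] :
    (if p then (1:ℝ) else 0) * (if q then (1:ℝ) else 0) = if p ∧ q then (1:ℝ) else 0 := by
  by_cases hp : p <;> by_cases hq : q <;> simp [hp, hq]

open scoped Classical in
lemma key_ineq (A : Set ℤ) (G : Finset ℤ) (s : ℕ) (k : ℤ) (c : ℝ) (hc0 : 0 ≤ c)
    (hc : ∀ y ∈ G, ∀ z ∈ G, y ≠ z →
      ((((Finset.Icc (k + 1) (k + (s:ℤ))).filter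
          (fun x => x + y ∈ A ∧ x + z ∈ A)).card : ℝ)) ≤ c) :
    (∑ y ∈ G, (cntZ A s (k + y) : ℝ)) ^ 2
      ≤ (s : ℝ) * ((G.card : ℝ) * s + (G.card : ℝ) ^ 2 * c) := by
  set I := Finset.Icc (k + 1) (k + (s:ℤ)) with hI
  have hIcard : (I.card : ℝ) = s := by
    rw [hI, Int.card_Icc]
    have h : (k + (s:ℤ) + 1 - (k + 1)).toNat = s := by omega
    rw [h]
  set f : ℤ → ℝ := fun x => ∑ y ∈ G, (if x + y ∈ A then (1:ℝ) else 0) with hf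
  -- Step A : row sums
  have hA : ∑ x ∈ I, f x = ∑ y ∈ G, (cntZ A s (k + y) : ℝ) := by
    rw [hf, Finset.sum_comm]
    apply Finset.sum_congr rfl
    intro y _
    rw [Finset.sum_boole, cnt_single_eq]
  -- Step C : square expansion
  have hC : ∑ x ∈ I, (f x) ^ 2
      = ∑ y ∈ G, ∑ z ∈ G, ((I.filter (fun x => x + y ∈ A ∧ x + z ∈ A)).card : ℝ) := by
    have hsq : ∀ x : ℤ, (f x) ^ 2
        = ∑ y ∈ G, ∑ z ∈ G, (if x + y ∈ A ∧ x + z ∈ A then (1:ℝ) else 0) := by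
      intro x
      rw [sq, hf, Finset.sum_mul_sum]
      exact Finset.sum_congr rfl fun y _ => Finset.sum_congr rfl fun z _ => myIteMulIte _ _
    simp_rw [hsq]
    rw [Finset.sum_comm]
    apply Finset.sum_congr rfl
    intro y _
    rw [Finset.sum_comm]
    apply Finset.sum_congr rfl
    intro z _
    rw [Finset.sum_boole]
  -- Step D : bound the double sum
  have hD : ∑ y ∈ G, ∑ z ∈ G, ((I.filter (fun x => x + y ∈ A ∧ x + z ∈ A)).card : ℝ)
      ≤ (G.card : ℝ) * s + (G.card : ℝ) ^ 2 * c := by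
    have hrow : ∀ y ∈ G, ∑ z ∈ G, ((I.filter (fun x => x + y ∈ A ∧ x + z ∈ A)).card : ℝ)
        ≤ (s : ℝ) + (G.card : ℝ) * c := by
      intro y hy
      rw [← Finset.add_sum_erase _ _ hy]
      have hdiag : ((I.filter (fun x => x + y ∈ A ∧ x + y ∈ A)).card : ℝ) ≤ (s : ℝ) := by
        rw [← hIcard]
        exact_mod_cast Finset.card_filter_le _ _
      have hoff : ∑ z ∈ G.erase y, ((I.filter (fun x => x + y ∈ A ∧ x + z ∈ A)).card : ℝ)
          ≤ (G.card : ℝ) * c := by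
        calc ∑ z ∈ G.erase y, ((I.filter (fun x => x + y ∈ A ∧ x + z ∈ A)).card : ℝ)
            ≤ ∑ _z ∈ G.erase y, c := by
              apply Finset.sum_le_sum
              intro z hz
              exact hc y hy z (Finset.mem_of_mem_erase hz)
                (Ne.symm (Finset.ne_of_mem_erase hz))
        _ = ((G.erase y).card : ℝ) * c := by rw [Finset.sum_const, nsmul_eq_mul]
        _ ≤ (G.card : ℝ) * c := by
              apply mul_le_mul_of_nonneg_right _ hc0
              exact_mod_cast Finset.card_le_card (Finset.erase_subset _ _)
      exact add_le_add hdiag hoff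
    calc ∑ y ∈ G, ∑ z ∈ G, ((I.filter (fun x => x + y ∈ A ∧ x + z ∈ A)).card : ℝ)
        ≤ ∑ _y ∈ G, ((s : ℝ) + (G.card : ℝ) * c) := Finset.sum_le_sum hrow
    _ = (G.card : ℝ) * ((s : ℝ) + (G.card : ℝ) * c) := by rw [Finset.sum_const, nsmul_eq_mul]
    _ = (G.card : ℝ) * s + (G.card : ℝ) ^ 2 * c := by ring
  -- Combine via Cauchy-Schwarz
  calc (∑ y ∈ G, (cntZ A s (k + y) : ℝ)) ^ 2
      = (∑ x ∈ I, f x) ^ 2 := by rw [hA]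
  _ ≤ (I.card : ℝ) * ∑ x ∈ I, (f x) ^ 2 := sq_sum_le_card_mul_sum_sq
  _ = (s : ℝ) * ∑ x ∈ I, (f x) ^ 2 := by rw [hIcard]
  _ ≤ (s : ℝ) * ((G.card : ℝ) * s + (G.card : ℝ) ^ 2 * c) := by
      apply mul_le_mul_of_nonneg_left _ (by positivity)
      rw [hC]
      exact hD

open scoped Classical in
lemma card_pair_symm (A : Set ℤ) (a b y z : ℤ) :
    ((Finset.Icc a b).filter (fun x => x + y ∈ A ∧ x + z ∈ A)).card
      = ((Finset.Icc a b).filter (fun x => x + z ∈ A ∧ x + y ∈ A)).card := by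
  congr 1
  ext x
  simp only [Finset.mem_filter]
  tauto

set_option maxHeartbeats 1600000 in
/-- If `A ⊆ ℤ` has positive upper Banach density `δ` and `ε ∈ (0,1)`, then the set of
`k` for which `A ∩ (A − k)` has upper Banach density `> δ² − ε` is syndetic. -/
theorem correlation_set_syndetic (A : Set ℤ) (δ : ℝ) (hδ : δ = upperBanachDensityZ A)
    (hδpos : 0 < δ) (ε : ℝ) (hε0 : 0 < ε) (hε1 : ε < 1) :
    SyndeticZ {k : ℤ | δ ^ 2 - ε < upperBanachDensityZ (A ∩ {a : ℤ | a + k ∈ A})} := by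
  classical
  set S : Set ℤ := {k : ℤ | δ ^ 2 - ε < upperBanachDensityZ (A ∩ {a : ℤ | a + k ∈ A})} with hS
  have hδ1 : δ ≤ 1 := hδ ▸ ubd_le_one A
  by_cases hcase : δ ^ 2 - ε < 0
  · -- trivial case : every k is in S
    refine ⟨1, one_pos, fun n => ⟨n, ?_, le_refl n, by omega⟩⟩
    exact lt_of_lt_of_le hcase (ubd_nonneg _)
  push_neg at hcase
  by_contra hns
  -- 0 ∈ S
  have h0S : (0 : ℤ) ∈ S := by
    have hA0 : A ∩ {a : ℤ | a + (0:ℤ) ∈ A} = A := by ext x; simp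
    show δ ^ 2 - ε < upperBanachDensityZ (A ∩ {a : ℤ | a + (0:ℤ) ∈ A})
    rw [hA0, ← hδ]
    nlinarith
  -- parameters
  set η : ℝ := min (δ / 2) (ε / 8) with hηdef
  have hη0 : 0 < η := lt_min (by linarith) (by linarith)
  have hηδ : η ≤ δ / 2 := min_le_left _ _
  have hηε : η ≤ ε / 8 := min_le_right _ _
  set N : ℕ := ⌈8 / ε⌉₊ with hNdef
  have hN : 8 < ε * ((N : ℝ) + 1) := by
    have h1 : (8:ℝ) / ε ≤ (N : ℝ) := Nat.le_ceil _
    have h2 : 8 / ε * ε = 8 := div_mul_cancel₀ 8 (ne_of_gt hε0)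
    nlinarith
  obtain ⟨G, hGcard, hGprop⟩ := exists_good_finset hns h0S N
  set T : ℕ := G.sup (fun y => y.natAbs) with hTdef
  have hT : ∀ y ∈ G, (y.natAbs : ℝ) ≤ (T : ℝ) := by
    intro y hy; exact_mod_cast Finset.le_sup (f := fun y => y.natAbs) hy
  set c : ℝ := δ ^ 2 - ε + η with hcdef
  have hc0 : 0 < c := by linarith
  -- eventual bound for all off-diagonal pairs
  have hev : ∀ᶠ s : ℕ in atTop, ∀ y ∈ G, ∀ z ∈ G, y ≠ z → ∀ k : ℤ,
      (((Finset.Icc (k + 1) (k + (s:ℤ))).filter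
        (fun x => x + y ∈ A ∧ x + z ∈ A)).card : ℝ) ≤ c * s := by
    rw [Filter.eventually_all_finset]
    intro y hy
    rw [Filter.eventually_all_finset]
    intro z hz
    by_cases hyz : y = z
    · exact Eventually.of_forall (fun s h => (h hyz).elim)
    have hkey : ∀ d : ℤ, d ∉ S →
        ∀ᶠ s : ℕ in atTop, ∀ k : ℤ, (cntZ (A ∩ {a : ℤ | a + d ∈ A}) s k : ℝ) < c * s := by
      intro d hd
      apply eventually_cnt_lt
      have : upperBanachDensityZ (A ∩ {a : ℤ | a + d ∈ A}) ≤ δ ^ 2 - ε := by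
        by_contra hcon
        exact hd (by push_neg at hcon; exact hcon)
      linarith
    rcases hGprop y hy z hz hyz with hd | hd
    · filter_upwards [hkey (z - y) hd] with s hs _ k
      rw [cnt_pair_eq]
      exact le_of_lt (hs (k + y))
    · filter_upwards [hkey (y - z) hd] with s hs _ k
      rw [card_pair_symm, cnt_pair_eq]
      exact le_of_lt (hs (k + z))
  -- eventual bound on T
  have hevT : ∀ᶠ s : ℕ in atTop, (T : ℝ) ≤ η * s := by
    filter_upwards [eventually_ge_atTop ⌈(T : ℝ) / η⌉₊] with s hs
    have h1 : (T : ℝ) / η ≤ (s : ℝ) := le_trans (Nat.le_ceil _) (by exact_mod_cast hs)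
    rw [div_le_iff₀ hη0] at h1
    linarith [h1]
  -- frequent good window
  have hfreq : ∃ᶠ s : ℕ in atTop, ∃ k : ℤ, (δ - η) * s < (cntZ A s k : ℝ) := by
    apply frequently_cnt_gt
    rw [← hδ]; linarith
  obtain ⟨s, ⟨k, hk⟩, hs1, hsT, hspair⟩ :=
    (hfreq.and_eventually ((eventually_ge_atTop 1).and (hevT.and hev))).exists
  have hs1R : (1:ℝ) ≤ (s:ℝ) := by exact_mod_cast hs1
  -- the key inequality
  have hKI := key_ineq A G s k (c * s) (by positivity)
    (fun y hy z hz hyz => hspair y hy z hz hyz k)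
  -- lower bound on the sum
  have hlow : ∀ y ∈ G, (δ - 2*η) * s ≤ (cntZ A s (k + y) : ℝ) := by
    intro y hy
    have h1 := cntZ_shift_ge A s k y
    have h2 := hT y hy
    linarith
  have hsum : ((G.card : ℝ)) * ((δ - 2*η) * s) ≤ ∑ y ∈ G, (cntZ A s (k + y) : ℝ) := by
    have := Finset.card_nsmul_le_sum G (fun y => (cntZ A s (k + y) : ℝ)) ((δ - 2*η) * s) hlow
    rwa [nsmul_eq_mul] at this
  have hδ2η : 0 ≤ δ - 2*η := by linarith
  set P : ℝ := (G.card : ℝ) with hPdef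
  have hP : 0 < P := by
    rw [hPdef, hGcard]; positivity
  have hPge : ε * P > 8 := by
    rw [hPdef, hGcard]; push_cast; linarith [hN]
  -- square the lower bound
  have hsq : (P * ((δ - 2*η) * s)) ^ 2 ≤ (∑ y ∈ G, (cntZ A s (k + y) : ℝ)) ^ 2 := by
    apply pow_le_pow_left₀ (by positivity) hsum
  have hs2pos : (0:ℝ) < (s:ℝ) ^ 2 := by positivity
  have hmain2 : P ^ 2 * (δ - 2*η) ^ 2 ≤ P + P ^ 2 * c := by
    have h1 : (P ^ 2 * (δ - 2*η) ^ 2) * (s:ℝ) ^ 2 ≤ (P + P ^ 2 * c) * (s:ℝ) ^ 2 := by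
      calc (P ^ 2 * (δ - 2*η) ^ 2) * (s:ℝ) ^ 2 = (P * ((δ - 2*η) * s)) ^ 2 := by ring
      _ ≤ (∑ y ∈ G, (cntZ A s (k + y) : ℝ)) ^ 2 := hsq
      _ ≤ (s : ℝ) * (P * s + P ^ 2 * (c * s)) := hKI
      _ = (P + P ^ 2 * c) * (s:ℝ) ^ 2 := by ring
    exact le_of_mul_le_mul_right h1 hs2pos
  have hmain3 : P * (δ - 2*η) ^ 2 ≤ 1 + P * c := by
    have h : P * (P * (δ - 2*η) ^ 2) ≤ P * (1 + P * c) := by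
      calc P * (P * (δ - 2*η) ^ 2) = P ^ 2 * (δ - 2*η) ^ 2 := by ring
      _ ≤ P + P ^ 2 * c := hmain2
      _ = P * (1 + P * c) := by ring
    exact le_of_mul_le_mul_left h hP
  -- final numeric contradiction
  have hlb : δ ^ 2 - 4*η ≤ (δ - 2*η) ^ 2 := by nlinarith [mul_nonneg hη0.le (by linarith : (0:ℝ) ≤ 1 - δ + η)]
  have hlb2 : P * (δ ^ 2 - 4*η) ≤ P * (δ - 2*η) ^ 2 :=
    mul_le_mul_of_nonneg_left hlb hP.le
  have hηP : P * η ≤ P * (ε / 8) := mul_le_mul_of_nonneg_left hηε hP.le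
  nlinarith [hmain3, hlb2, hηP, hPge]
end

section
/- Let S = ⋃_{j,l ≥ 1} (l·10^j − j, l·10^j + j) ⊆ ℕ (open integer intervals). Let k ≥ 1, l ≥ 1, and n ≥ 0 satisfy 10^{n−1} < k ≤ 10^n. If m = l·10^k + Σ_{j=0}^{n} 10^j or m = l·10^k − Σ_{j=0}^{n} 10^j, then either m ∉ S, or m ∈ (l₀·10^{j₀} − j₀, l₀·10^{j₀} + j₀) for some j₀ > k and l₀ ≥ 1. -/
/-!
Write `R t = ∑_{i<t} 10^i`, so `m = l·10^k ± R (n+1)`. Suppose `m` lies within `j` of a multiple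
of `10^j` for some `1 ≤ j ≤ k`. Since `10^j ∣ l·10^k`, modulo `10^j` we have `m ≡ ±A` with
`A = R (min (n+1) j)`. Now `A ≥ min (10^n) j ≥ j` because `j ≤ k ≤ 10^n`, and `A + j ≤ R j + j ≤ 10^j`,
so both `A` and `10^j - A` lie in `[j, 10^j - j]`: such an `m` is at distance at least `j` from
every multiple of `10^j`, a contradiction.
-/

open Finset

theorem not_near_mul_of_modEq {q j m r : ℕ} (hm : m ≡ r [MOD q]) (hjr : j ≤ r) (hrq : r + j ≤ q)
    (l : ℕ) : ¬ (l * q < m + j ∧ m < l * q + j) := by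
  rintro ⟨hlo, hhi⟩
  have hr : m % q = r := by
    rcases Nat.eq_zero_or_pos j with rfl | hj
    · omega
    · exact Eq.trans hm (Nat.mod_eq_of_lt (by omega))
  have hdiv := Nat.div_add_mod m q
  rcases lt_or_ge (m / q) l with hql | hlq
  · have : q * (m / q + 1) ≤ q * l := Nat.mul_le_mul_left q hql
    nlinarith
  · have : q * l ≤ q * (m / q) := Nat.mul_le_mul_left q hlq
    nlinarith

section GeomSum

variable (b : ℕ)

theorem geomSum_range_monotone : Monotone fun t => ∑ i ∈ range t, b ^ i :=
  fun _ _ h => sum_le_sum_of_subset (range_subset_range.2 h)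

theorem geomSum_range_modEq_min (t j : ℕ) :
    ∑ i ∈ range t, b ^ i ≡ ∑ i ∈ range (min t j), b ^ i [MOD b ^ j] := by
  rcases le_total t j with htj | hjt
  · rw [min_eq_left htj]
  · obtain ⟨s, rfl⟩ := Nat.exists_eq_add_of_le hjt
    simp only [min_eq_right hjt, sum_range_add, pow_add, ← mul_sum]
    exact Nat.add_mul_mod_self_left _ _ _

theorem pow_le_geomSum_range_succ (n : ℕ) : b ^ n ≤ ∑ i ∈ range (n + 1), b ^ i := by
  rw [sum_range_succ]
  exact Nat.le_add_left _ _

variable {b}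

theorem le_geomSum_range (hb : 1 ≤ b) (t : ℕ) : t ≤ ∑ i ∈ range t, b ^ i := by
  simpa using card_nsmul_le_sum (range t) (b ^ ·) 1 fun i _ => Nat.one_le_pow i b hb

theorem geomSum_range_add_le_pow (hb : 3 ≤ b) (j : ℕ) : ∑ i ∈ range j, b ^ i + j ≤ b ^ j := by
  obtain ⟨x, rfl⟩ := Nat.exists_eq_add_of_le' (by omega : 1 ≤ b)
  have hsum := geom_sum_mul_add x j
  have hj := le_geomSum_range (by omega : 1 ≤ x + 1) j
  nlinarith

end GeomSum

theorem fact_one_general (S : Set ℕ)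
    (hS : S = {m : ℕ | ∃ j ≥ 1, ∃ l ≥ 1, l * 10 ^ j < m + j ∧ m < l * 10 ^ j + j})
    (k l n : ℕ) (hn2 : k ≤ 10 ^ n)
    (m : ℕ)
    (hm : m = l * 10 ^ k + ∑ j ∈ Finset.range (n + 1), 10 ^ j ∨
          m + ∑ j ∈ Finset.range (n + 1), 10 ^ j = l * 10 ^ k) :
    m ∉ S ∨ ∃ j₀ > k, ∃ l₀ ≥ 1, l₀ * 10 ^ j₀ < m + j₀ ∧ m < l₀ * 10 ^ j₀ + j₀ := by
  subst hS
  refine or_iff_not_imp_left.2 fun hmem => ?_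
  obtain ⟨j, -, l₁, hl₁, hnear⟩ := not_not.1 hmem
  refine (lt_or_ge k j).elim (fun hkj => ⟨j, hkj, l₁, hl₁, hnear⟩) fun hjk => absurd hnear ?_
  have hA_ge : j ≤ ∑ i ∈ range (min (n + 1) j), 10 ^ i := by
    rw [Monotone.map_min (geomSum_range_monotone 10)]
    exact le_min ((hjk.trans hn2).trans (pow_le_geomSum_range_succ 10 n))
      (le_geomSum_range (by norm_num) j)
  set A := ∑ i ∈ range (min (n + 1) j), 10 ^ i
  have hA_le : A + j ≤ 10 ^ j :=
    (Nat.add_le_add_right (geomSum_range_monotone 10 (min_le_right _ _)) j).trans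
      (geomSum_range_add_le_pow (by norm_num) j)
  have hT := geomSum_range_modEq_min 10 (n + 1) j
  have hlk : l * 10 ^ k ≡ 0 [MOD 10 ^ j] :=
    Nat.modEq_zero_iff_dvd.2 (Dvd.dvd.mul_left (pow_dvd_pow 10 hjk) l)
  rcases hm with rfl | hm
  · exact not_near_mul_of_modEq (by simpa using hlk.add hT) hA_ge hA_le l₁
  · have hmA : m ≡ 10 ^ j - A [MOD 10 ^ j] := by
      refine Nat.ModEq.add_right_cancel' A ?_
      calc m + A ≡ m + ∑ i ∈ range (n + 1), 10 ^ i [MOD 10 ^ j] := (hT.add_left m).symm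
        _ = l * 10 ^ k := hm
        _ ≡ 0 [MOD 10 ^ j] := hlk
        _ ≡ 10 ^ j - A + A [MOD 10 ^ j] := by
          rw [Nat.sub_add_cancel (by omega)]; exact (Nat.modEq_zero_iff_dvd.2 dvd_rfl).symm
    exact not_near_mul_of_modEq hmA (by omega) (by omega) l₁

/-- Fact 1: with `S = ⋃_{j,l≥1} (l·10^j − j, l·10^j + j)`, if `10^{n−1} < k ≤ 10^n`
and `m = l·10^k ± Σ_{j=0}^n 10^j`, then either `m ∉ S` or `m` lies in an interval
`(l₀·10^{j₀} − j₀, l₀·10^{j₀} + j₀)` with `j₀ > k`. -/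
theorem fact_one (S : Set ℕ)
    (hS : S = {m : ℕ | ∃ j ≥ 1, ∃ l ≥ 1, l * 10 ^ j < m + j ∧ m < l * 10 ^ j + j})
    (k l n : ℕ) (hk : 1 ≤ k) (hl : 1 ≤ l)
    (hn1 : n = 0 ∨ 10 ^ (n - 1) < k) (hn2 : k ≤ 10 ^ n)
    (m : ℕ)
    (hm : m = l * 10 ^ k + ∑ j ∈ Finset.range (n + 1), 10 ^ j ∨
          m + ∑ j ∈ Finset.range (n + 1), 10 ^ j = l * 10 ^ k) :
    m ∉ S ∨ ∃ j₀ > k, ∃ l₀ ≥ 1, l₀ * 10 ^ j₀ < m + j₀ ∧ m < l₀ * 10 ^ j₀ + j₀ :=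
  fact_one_general S hS k l n hn2 m hm
end

section
/- Let X be a topological vector space, T a continuous linear operator on X, and x ∈ X. For non-empty open sets U, V ⊆ X and n ∈ ℕ with Tⁿ(U) ∩ V ≠ ∅, set Uₙ = U ∩ T^{−n}(V). Then N(x, Uₙ) − N(x, Uₙ) + n ⊆ N(U, V), where N(x, W) = {m ∈ ℕ : Tᵐx ∈ W} and N(U, V) = {m ∈ ℕ : Tᵐ(U) ∩ V ≠ ∅}, and the difference set is taken over pairs s₁ ≥ s₂ in N(x, Uₙ) (giving s₁ − s₂ + n), as well as over pairs with s₁ ≤ s₂ when s₁ − s₂ + n ≥ 0. -/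
theorem Function.nonempty_image_iterate_inter_of_iterate_mem {α : Type*} (f : α → α) {x : α}
    {U V : Set α} {n s₁ s₂ : ℕ} (h₁ : f^[n] (f^[s₁] x) ∈ V) (h₂ : f^[s₂] x ∈ U)
    (hle : s₂ ≤ s₁ + n) : (f^[s₁ + n - s₂] '' U ∩ V).Nonempty := by
  refine ⟨_, Set.mem_image_of_mem _ h₂, ?_⟩
  rwa [← iterate_add_apply, Nat.sub_add_cancel hle, add_comm, iterate_add_apply]

theorem diff_of_return_times_subset_general {X : Type*} [AddCommGroup X] [Module ℝ X]
    [TopologicalSpace X]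
    (T : X →L[ℝ] X) (x : X) (U V : Set X) (n : ℕ) :
    ∀ s₁ s₂ : ℕ, (T ^ s₁) x ∈ U ∩ (T ^ n) ⁻¹' V → (T ^ s₂) x ∈ U ∩ (T ^ n) ⁻¹' V →
      s₂ ≤ s₁ + n → ((T ^ (s₁ + n - s₂)) '' U ∩ V).Nonempty := by
  intro s₁ s₂ h₁ h₂ hle
  simp only [FunLike.coe_pow_eq_iterate] at h₁ h₂ ⊢
  exact Function.nonempty_image_iterate_inter_of_iterate_mem T h₁.2 h₂.1 hle

/-- If `Tⁿ(U) ∩ V ≠ ∅` and `Uₙ = U ∩ T⁻ⁿ(V)`, then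
`N(x, Uₙ) − N(x, Uₙ) + n ⊆ N(U, V)`. -/
theorem diff_of_return_times_subset {X : Type*} [AddCommGroup X] [Module ℝ X]
    [TopologicalSpace X] [IsTopologicalAddGroup X] [ContinuousSMul ℝ X]
    (T : X →L[ℝ] X) (x : X) (U V : Set X) (hU : IsOpen U) (hV : IsOpen V)
    (hUne : U.Nonempty) (hVne : V.Nonempty) (n : ℕ)
    (hn : ((T ^ n) '' U ∩ V).Nonempty) :
    ∀ s₁ s₂ : ℕ, (T ^ s₁) x ∈ U ∩ (T ^ n) ⁻¹' V → (T ^ s₂) x ∈ U ∩ (T ^ n) ⁻¹' V →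
      s₂ ≤ s₁ + n → ((T ^ (s₁ + n - s₂)) '' U ∩ V).Nonempty :=
  diff_of_return_times_subset_general T x U V n
end

section
/- Let B_w be a bounded weighted backward shift on ℓ^p(ℕ), 1 ≤ p < ∞, let x ∈ ℓ^p(ℕ), and let A = {n ∈ ℕ : ‖B_wⁿx − e_0‖ ≤ 1/2}. Then for every n ∈ A, Σ_{m>n, m∈A} 1/|w_1⋯w_{m−n}|^p ≤ 1. -/
open scoped ENNReal

/-!
Let `y = Bⁿx − e₀`. If `n < m` with `m ∈ A` and `k = m - n`, then `(w₁⋯w_k) · y_k = w₁⋯w_m x_m`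
is the `0`-th coordinate of `Bᵐx`, which is `1/2`-close to `1`, so `|w₁⋯w_k| · |y_k| ≥ 1/2`.
Hence `1/|w₁⋯w_k|^p ≤ |2 y_k|^p`, and summing over the distinct indices `k = m - n` gives at
most `‖2 (Bⁿx − e₀)‖^p ≤ 1`.
-/

open Finset

namespace lp

variable {α : Type*} {E : α → Type*} [∀ i, NormedAddCommGroup (E i)] {p : ℝ≥0∞}

theorem norm_le_norm_apply_add_norm_sub_single [DecidableEq α] (hp : p ≠ 0) (f : lp E p)
    (i : α) (c : E i) : ‖c‖ ≤ ‖f i‖ + ‖f - lp.single p i c‖ := by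
  have h := norm_apply_le_norm hp (f - lp.single p i c) i
  rw [coeFn_sub, Pi.sub_apply, lp.single_apply_self] at h
  linarith [norm_le_norm_add_norm_sub' c (f i), norm_sub_rev c (f i)]

theorem tsum_ofReal_norm_rpow_comp_le {ι : Type*} (hp : 0 < p.toReal) (f : lp E p)
    {g : ι → α} (hg : Function.Injective g) :
    ∑' j, ENNReal.ofReal (‖f (g j)‖ ^ p.toReal) ≤ ENNReal.ofReal (‖f‖ ^ p.toReal) := by
  rw [norm_rpow_eq_tsum hp, ENNReal.ofReal_tsum_of_nonneg (fun _ => by positivity)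
    ((lp.memℓp f).summable hp)]
  exact ENNReal.tsum_comp_le_tsum_of_injective hg _

end lp

theorem Real.one_div_rpow_le_rpow_of_one_le_mul {a b q : ℝ} (ha : 0 ≤ a)
    (hab : 1 ≤ a * b) (hq : 0 ≤ q) : 1 / a ^ q ≤ b ^ q := by
  have ha' : 0 < a := ha.lt_of_ne' (by rintro rfl; norm_num at hab)
  rw [one_div, ← Real.inv_rpow ha, ← one_div]
  gcongr
  rwa [div_le_iff₀ ha', mul_comm]

section WeightedShift

variable {𝕜 : Type*} [NormedField 𝕜] {p : ℝ≥0∞} [Fact (1 ≤ p)] {w : ℕ → 𝕜}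
  {B : lp (fun _ : ℕ => 𝕜) p →L[𝕜] lp (fun _ : ℕ => 𝕜) p}

theorem weightedShift_pow_apply
    (hB : ∀ (y : lp (fun _ : ℕ => 𝕜) p) (i : ℕ), B y i = w (i + 1) * y (i + 1))
    (n : ℕ) (y : lp (fun _ : ℕ => 𝕜) p) (i : ℕ) :
    (B ^ n) y i = (∏ ν ∈ Ioc i (i + n), w ν) * y (i + n) := by
  induction n generalizing y with
  | zero => simp
  | succ n ih =>
    rw [pow_succ]
    change (B ^ n) (B y) i = _
    rw [ih, hB, ← add_assoc, prod_Ioc_succ_top (Nat.le_add_right i n), mul_assoc]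

theorem weightedShift_prod_mul_pow_sub_single_apply
    (hB : ∀ (y : lp (fun _ : ℕ => 𝕜) p) (i : ℕ), B y i = w (i + 1) * y (i + 1))
    (n : ℕ) (x : lp (fun _ : ℕ => 𝕜) p) {k : ℕ} (hk : k ≠ 0) :
    (∏ ν ∈ Icc 1 k, w ν) * ((B ^ n) x - lp.single p 0 1 : lp (fun _ : ℕ => 𝕜) p) k
      = (B ^ (k + n)) x 0 := by
  rw [lp.coeFn_sub, Pi.sub_apply, lp.single_apply_ne p 0 1 hk, sub_zero,
    weightedShift_pow_apply hB, weightedShift_pow_apply hB, zero_add, ← mul_assoc,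
    show Icc 1 k = Ioc 0 k from Icc_add_one_left_eq_Ioc 0 k,
    prod_Ioc_consecutive _ (Nat.zero_le k) (Nat.le_add_right k n)]

theorem one_le_norm_prod_mul_norm_apply_add_norm_pow_sub_single
    (hB : ∀ (y : lp (fun _ : ℕ => 𝕜) p) (i : ℕ), B y i = w (i + 1) * y (i + 1))
    (x : lp (fun _ : ℕ => 𝕜) p) {n m : ℕ} (hnm : n < m) :
    1 ≤ ‖∏ ν ∈ Icc 1 (m - n), w ν‖ *
        ‖((B ^ n) x - lp.single p 0 1 : lp (fun _ : ℕ => 𝕜) p) (m - n)‖ +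
      ‖(B ^ m) x - lp.single p 0 1‖ := by
  have hp : p ≠ 0 := (zero_lt_one.trans_le (Fact.out : 1 ≤ p)).ne'
  have hprod := weightedShift_prod_mul_pow_sub_single_apply hB n x (Nat.sub_ne_zero_of_lt hnm)
  rw [Nat.sub_add_cancel hnm.le] at hprod
  simpa only [norm_one, ← hprod, norm_mul] using
    lp.norm_le_norm_apply_add_norm_sub_single hp ((B ^ m) x) 0 (1 : 𝕜)

end WeightedShift

/-- For a bounded weighted backward shift `B_w` on `ℓ^p(ℕ)` and
`A = {n : ‖B_wⁿx − e₀‖ ≤ 1/2}`, for every `n ∈ A` one has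
`Σ_{m ∈ A, m > n} 1/|w₁⋯w_{m−n}|^p ≤ 1`. -/
theorem weighted_shift_return_sum_bound (p : ℝ≥0∞) [Fact (1 ≤ p)] (hp' : p ≠ ⊤)
    (w : ℕ → ℝ)
    (B : lp (fun _ : ℕ => ℝ) p →L[ℝ] lp (fun _ : ℕ => ℝ) p)
    (hB : ∀ (y : lp (fun _ : ℕ => ℝ) p) (i : ℕ),
      (B y : ∀ _ : ℕ, ℝ) i = w (i + 1) * (y : ∀ _ : ℕ, ℝ) (i + 1))
    (x : lp (fun _ : ℕ => ℝ) p)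
    (A : Set ℕ)
    (hA : A = {n : ℕ | ‖(B ^ n) x - lp.single p 0 1‖ ≤ 1 / 2}) :
    ∀ n ∈ A,
      (∑' m : {m : ℕ // m ∈ A ∧ n < m},
        ENNReal.ofReal (1 / |∏ ν ∈ Finset.Icc 1 ((m : ℕ) - n), w ν| ^ p.toReal)) ≤ 1 := by
  have hp0 : p ≠ 0 := (zero_lt_one.trans_le (Fact.out : 1 ≤ p)).ne'
  have hq : 0 < p.toReal := ENNReal.toReal_pos hp0 hp'
  intro n hn
  have hn' : ‖(B ^ n) x - lp.single p 0 1‖ ≤ 1 / 2 := by rwa [hA] at hn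
  set y : lp (fun _ : ℕ => ℝ) p := (2 : ℝ) • ((B ^ n) x - lp.single p 0 1)
  have hy : ‖y‖ ≤ 1 := by
    rw [norm_smul, Real.norm_two]
    linarith
  have hkey (m : {m : ℕ // m ∈ A ∧ n < m}) :
      1 ≤ |∏ ν ∈ Icc 1 ((m : ℕ) - n), w ν| * ‖y ((m : ℕ) - n)‖ := by
    obtain ⟨m, hm, hnm⟩ := m
    have hm' : ‖(B ^ m) x - lp.single p 0 1‖ ≤ 1 / 2 := by rwa [hA] at hm
    have hret := one_le_norm_prod_mul_norm_apply_add_norm_pow_sub_single hB x hnm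
    rw [lp.coeFn_smul, Pi.smul_apply, norm_smul, Real.norm_two, ← Real.norm_eq_abs]
    linarith
  have hinj : Function.Injective fun m : {m : ℕ // m ∈ A ∧ n < m} => (m : ℕ) - n := by
    rintro ⟨a, _, ha⟩ ⟨b, _, hb⟩ h
    simp only [Subtype.mk.injEq] at h ⊢
    omega
  calc _ ≤ ∑' m : {m : ℕ // m ∈ A ∧ n < m}, ENNReal.ofReal (‖y ((m : ℕ) - n)‖ ^ p.toReal) :=
        ENNReal.tsum_le_tsum fun m => ENNReal.ofReal_le_ofReal <|
          Real.one_div_rpow_le_rpow_of_one_le_mul (abs_nonneg _) (hkey m) hq.le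
    _ ≤ ENNReal.ofReal (‖y‖ ^ p.toReal) := lp.tsum_ofReal_norm_rpow_comp_le hq y hinj
    _ ≤ 1 := ENNReal.ofReal_le_one.2 (Real.rpow_le_one (norm_nonneg _) hy hq.le)
end

section
/- Let X ≠ {0} be a separable Banach space, T a bounded operator on X, and x ∈ X a vector with dense orbit such that for every non-empty open U, N(x,U) ∈ 𝒜 for a non-trivial hereditarily upward family 𝒜 ⊆ P(ℕ). Then for every n ≥ 1 and C > 0 there exist y ∈ X and 0 < ε < 1 such that, setting A = N(x, B(0,C)) and B = N(x, B(y,ε)), one has: dist(A, B) ≥ n (no element of B is within n−1 of an element of A), and any two distinct elements of B differ by at least n; moreover B ∈ 𝒜. -/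
private lemma pow_apply_add' {X : Type*} [NormedAddCommGroup X] [NormedSpace ℝ X]
    (T : X →L[ℝ] X) (i j : ℕ) (z : X) :
    (T ^ (i + j)) z = (T ^ i) ((T ^ j) z) := by
  rw [pow_add, ContinuousLinearMap.mul_apply]

private lemma pow_apply_norm_le' {X : Type*} [NormedAddCommGroup X] [NormedSpace ℝ X]
    (T : X →L[ℝ] X) (i : ℕ) (z : X) :
    ‖(T ^ i) z‖ ≤ (‖T‖ + 1) ^ i * ‖z‖ := by
  induction i generalizing z with
  | zero => simpa using le_refl ‖z‖
  | succ i ih =>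
    have h1 : (T ^ (i + 1)) z = (T ^ i) (T z) := by
      rw [pow_succ, ContinuousLinearMap.mul_apply]
    rw [h1]
    calc ‖(T ^ i) (T z)‖ ≤ (‖T‖ + 1) ^ i * ‖T z‖ := ih (T z)
      _ ≤ (‖T‖ + 1) ^ i * ((‖T‖ + 1) * ‖z‖) := by
          have h2 : ‖T z‖ ≤ (‖T‖ + 1) * ‖z‖ :=
            (T.le_opNorm z).trans (by nlinarith [norm_nonneg z, norm_nonneg T])
          have h3 : (0:ℝ) ≤ (‖T‖ + 1) ^ i := by positivity
          nlinarith
      _ = (‖T‖ + 1) ^ (i + 1) * ‖z‖ := by ring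

private lemma exists_big_orbit' {X : Type*} [NormedAddCommGroup X] [NormedSpace ℝ X]
    [Nontrivial X] (T : X →L[ℝ] X) (x : X)
    (hdense : DenseRange (fun n : ℕ => (T ^ n) x)) (R : ℝ) (N : ℕ) :
    ∃ m : ℕ, N ≤ m ∧ R < ‖(T ^ m) x‖ := by
  haveI := Module.punctured_nhds_neBot ℝ X
  have hfin : ((fun m : ℕ => (T ^ m) x) '' (Set.Iio N)).Finite :=
    (Set.finite_Iio N).image _
  have hd2 : Dense (Set.range (fun m : ℕ => (T ^ m) x) \
      ((fun m : ℕ => (T ^ m) x) '' (Set.Iio N))) := hdense.diff_finite hfin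
  have hUopen : IsOpen {z : X | R < ‖z‖} := isOpen_lt continuous_const continuous_norm
  have hUne : {z : X | R < ‖z‖}.Nonempty := by
    obtain ⟨v, hv⟩ := exists_ne (0 : X)
    have hv' : (0:ℝ) < ‖v‖ := norm_pos_iff.2 hv
    refine ⟨((|R| + 1) / ‖v‖) • v, ?_⟩
    have h1 : ‖((|R| + 1) / ‖v‖) • v‖ = |R| + 1 := by
      rw [norm_smul, Real.norm_eq_abs, abs_of_nonneg (by positivity),
        div_mul_cancel₀ _ hv'.ne']
    simp only [Set.mem_setOf_eq, h1]
    calc R ≤ |R| := le_abs_self R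
      _ < |R| + 1 := by linarith
  obtain ⟨z, hz_mem, hzU⟩ := hd2.exists_mem_open hUopen hUne
  obtain ⟨⟨m, rfl⟩, hznot⟩ := hz_mem
  refine ⟨m, ?_, hzU⟩
  by_contra hm
  exact hznot ⟨m, Set.mem_Iio.2 (by omega), rfl⟩

private lemma orbit_not_periodic' {X : Type*} [NormedAddCommGroup X] [NormedSpace ℝ X]
    [Nontrivial X] (T : X →L[ℝ] X) (x : X)
    (hdense : DenseRange (fun n : ℕ => (T ^ n) x)) (m i : ℕ) (hi : 1 ≤ i) :
    (T ^ i) ((T ^ m) x) ≠ (T ^ m) x := by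
  intro heq
  have hmi : (T ^ (i + m)) x = (T ^ m) x := by rw [pow_apply_add', heq]
  have horb : ∀ k, ∃ j, j < m + i ∧ (T ^ j) x = (T ^ k) x := by
    intro k
    induction k using Nat.strong_induction_on with
    | _ k ih =>
      by_cases hk : k < m + i
      · exact ⟨k, hk, rfl⟩
      · obtain ⟨j, hj, hje⟩ := ih (k - i) (by omega)
        refine ⟨j, hj, hje.trans ?_⟩
        have e1 : (T ^ k) x = (T ^ (k - i - m)) ((T ^ (i + m)) x) := by
          rw [← pow_apply_add']
          congr 2
          omega
        have e2 : (T ^ (k - i)) x = (T ^ (k - i - m)) ((T ^ m) x) := by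
          rw [← pow_apply_add']
          congr 2
          omega
        rw [e2, e1, hmi]
  have hfin : ((fun j : ℕ => (T ^ j) x) '' (Set.Iio (m + i))).Finite :=
    (Set.finite_Iio _).image _
  have hsub : Set.range (fun k : ℕ => (T ^ k) x) ⊆
      (fun j : ℕ => (T ^ j) x) '' (Set.Iio (m + i)) := by
    rintro _ ⟨k, rfl⟩
    obtain ⟨j, hj, hje⟩ := horb k
    exact ⟨j, hj, hje⟩
  have huniv : (Set.univ : Set X) ⊆ (fun j : ℕ => (T ^ j) x) '' (Set.Iio (m + i)) := by
    rw [← hdense.closure_eq]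
    exact closure_minimal hsub hfin.isClosed
  haveI : Infinite X := by
    obtain ⟨v, hv⟩ := exists_ne (0 : X)
    exact Infinite.of_injective (fun c : ℝ => c • v) (smul_left_injective ℝ hv)
  exact Set.infinite_univ (hfin.subset huniv)

set_option maxHeartbeats 1000000 in
/-- Key separation lemma from Proposition on Banach spaces: for an `𝒜`-frequently
hypercyclic vector `x`, for each `n ≥ 1` and `C > 0` there are `y` and `0 < ε < 1`
such that `B = N(x, B(y,ε))` is `n`-separated from `A = N(x, B(0,C))`, is
`n`-separated within itself, and belongs to `𝒜`. -/
theorem separated_return_sets {X : Type*} [NormedAddCommGroup X] [NormedSpace ℝ X]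
    [CompleteSpace X] [Nontrivial X] [TopologicalSpace.SeparableSpace X]
    (T : X →L[ℝ] X) (x : X)
    (hdense : DenseRange (fun n : ℕ => (T ^ n) x))
    (𝒜 : Set (Set ℕ)) (hne : ∅ ∉ 𝒜)
    (hup : ∀ A B : Set ℕ, A ∈ 𝒜 → A ⊆ B → B ∈ 𝒜)
    (hx : ∀ U : Set X, IsOpen U → U.Nonempty → {n : ℕ | (T ^ n) x ∈ U} ∈ 𝒜) :
    ∀ n : ℕ, 1 ≤ n → ∀ C : ℝ, 0 < C →
      ∃ y : X, ∃ ε : ℝ, 0 < ε ∧ ε < 1 ∧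
        (∀ a ∈ {m : ℕ | ‖(T ^ m) x‖ < C}, ∀ b ∈ {m : ℕ | ‖(T ^ m) x - y‖ < ε},
          (n : ℤ) ≤ |(a : ℤ) - (b : ℤ)|) ∧
        (∀ b ∈ {m : ℕ | ‖(T ^ m) x - y‖ < ε}, ∀ b' ∈ {m : ℕ | ‖(T ^ m) x - y‖ < ε},
          b ≠ b' → (n : ℤ) ≤ |(b : ℤ) - (b' : ℤ)|) ∧
        {m : ℕ | ‖(T ^ m) x - y‖ < ε} ∈ 𝒜 := by
  intro n hn C hC
  obtain ⟨M, hMdef⟩ : ∃ M : ℝ, M = (‖T‖ + 1) ^ (n - 1) := ⟨_, rfl⟩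
  have hM1 : (1:ℝ) ≤ M := by
    rw [hMdef]; exact one_le_pow₀ (by nlinarith [norm_nonneg T])
  have hMpos : (0:ℝ) < M := by linarith
  have hMC : 0 < M * C := mul_pos hMpos hC
  -- bound on iterates up to n-1
  have hMi : ∀ i, i ≤ n - 1 → ∀ z : X, ‖(T ^ i) z‖ ≤ M * ‖z‖ := by
    intro i hi z
    calc ‖(T ^ i) z‖ ≤ (‖T‖ + 1) ^ i * ‖z‖ := pow_apply_norm_le' T i z
      _ ≤ M * ‖z‖ := by
          have h1 : (‖T‖ + 1) ^ i ≤ M := by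
            rw [hMdef]
            exact pow_le_pow_right₀ (by nlinarith [norm_nonneg T]) hi
          nlinarith [norm_nonneg z]
  -- choose the orbit point y = T^m x
  obtain ⟨m', hm'ge, hm'big⟩ :=
    exists_big_orbit' T x hdense (M * (C + M + M * C + 1)) (n - 1)
  obtain ⟨m, hmdef⟩ : ∃ m : ℕ, m = m' - (n - 1) := ⟨_, rfl⟩
  obtain ⟨y, hydef⟩ : ∃ y : X, y = (T ^ m) x := ⟨_, rfl⟩
  -- lower bound on ‖T^i y‖ for i ≤ n-1
  have hyi : ∀ i, i ≤ n - 1 → C + M + M * C + 1 ≤ ‖(T ^ i) y‖ := by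
    intro i hi
    have key : (T ^ m') x = (T ^ (n - 1 - i)) ((T ^ i) y) := by
      rw [hydef, ← pow_apply_add', ← pow_apply_add']
      congr 2
      omega
    have h1 : ‖(T ^ (n - 1 - i)) ((T ^ i) y)‖ ≤ M * ‖(T ^ i) y‖ :=
      hMi (n - 1 - i) (by omega) _
    have h2 : M * (C + M + M * C + 1) < M * ‖(T ^ i) y‖ := by
      rw [key] at hm'big; linarith
    exact le_of_lt (lt_of_mul_lt_mul_left h2 hMpos.le)
  have hy0 : C + M + M * C + 1 ≤ ‖y‖ := by
    have := hyi 0 (by omega)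
    simpa using this
  -- non-periodicity and the choice of ε
  obtain ⟨s, hsdef⟩ : ∃ s : Finset ℝ,
      s = insert 1 ((Finset.Ico 1 n).image fun i => ‖(T ^ i) y - y‖) := ⟨_, rfl⟩
  have hsne : s.Nonempty := by rw [hsdef]; exact Finset.insert_nonempty _ _
  obtain ⟨η, hηdef⟩ : ∃ η : ℝ, η = s.min' hsne := ⟨_, rfl⟩
  have hη1 : η ≤ 1 := by
    rw [hηdef]
    exact Finset.min'_le _ _ (by rw [hsdef]; exact Finset.mem_insert_self _ _)
  have hηpos : 0 < η := by
    rw [hηdef, Finset.lt_min'_iff]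
    intro r hr
    rw [hsdef] at hr
    rcases Finset.mem_insert.1 hr with h | h
    · rw [h]; norm_num
    · obtain ⟨i, hi, rfl⟩ := Finset.mem_image.1 h
      rw [Finset.mem_Ico] at hi
      have hne' : (T ^ i) y - y ≠ 0 := by
        rw [hydef]
        exact sub_ne_zero.2 (orbit_not_periodic' T x hdense m i hi.1)
      exact norm_pos_iff.2 hne'
  have hηle : ∀ i, 1 ≤ i → i < n → η ≤ ‖(T ^ i) y - y‖ := by
    intro i h1 h2
    rw [hηdef]
    apply Finset.min'_le
    rw [hsdef]
    exact Finset.mem_insert_of_mem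
      (Finset.mem_image.2 ⟨i, Finset.mem_Ico.2 ⟨h1, h2⟩, rfl⟩)
  obtain ⟨ε, hεdef⟩ : ∃ ε : ℝ, ε = η / (2 * (M + 1)) := ⟨_, rfl⟩
  have hεpos : 0 < ε := by rw [hεdef]; positivity
  have hεM : (M + 1) * ε = η / 2 := by
    rw [hεdef]; field_simp
  have hεhalf : ε ≤ 1 / 2 := by
    have h2 : (M + 1) * ε ≤ 1 / 2 := by rw [hεM]; linarith
    nlinarith
  have hε1 : ε < 1 := by linarith
  have hMε : M * ε ≤ 1 / 2 := by nlinarith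
  refine ⟨y, ε, hεpos, hε1, ?_, ?_, ?_⟩
  · -- separation of A and B
    intro a ha b hb
    simp only [Set.mem_setOf_eq] at ha hb
    by_contra hcon
    push_neg at hcon
    rcases le_or_gt b a with hba | hab
    · -- a = i + b with i ≤ n-1
      obtain ⟨i, hidef⟩ : ∃ i : ℕ, i = a - b := ⟨_, rfl⟩
      have hi : i ≤ n - 1 := by
        rcases abs_cases ((a:ℤ) - (b:ℤ)) with ⟨he, _⟩ | ⟨he, _⟩ <;> omega
      have hT : (T ^ a) x = (T ^ i) ((T ^ b) x) := by
        rw [← pow_apply_add']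
        congr 2
        omega
      have h1 : ‖(T ^ i) ((T ^ b) x) - (T ^ i) y‖ ≤ M * ε := by
        rw [← map_sub]
        calc ‖(T ^ i) ((T ^ b) x - y)‖ ≤ M * ‖(T ^ b) x - y‖ := hMi i hi _
          _ ≤ M * ε := by nlinarith
      have h2 := hyi i hi
      have h3 : ‖(T ^ i) y‖ - ‖(T ^ i) ((T ^ b) x) - (T ^ i) y‖
          ≤ ‖(T ^ i) ((T ^ b) x)‖ := by
        have h5 := norm_sub_norm_le ((T ^ i) y) ((T ^ i) ((T ^ b) x))
        have h4 : ‖(T ^ i) y - (T ^ i) ((T ^ b) x)‖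
            = ‖(T ^ i) ((T ^ b) x) - (T ^ i) y‖ := norm_sub_rev _ _
        linarith
      rw [hT] at ha
      linarith
    · -- b = i + a with 1 ≤ i ≤ n-1
      obtain ⟨i, hidef⟩ : ∃ i : ℕ, i = b - a := ⟨_, rfl⟩
      have hi : i ≤ n - 1 ∧ 1 ≤ i := by
        constructor
        · rcases abs_cases ((a:ℤ) - (b:ℤ)) with ⟨he, _⟩ | ⟨he, _⟩ <;> omega
        · omega
      have hT : (T ^ b) x = (T ^ i) ((T ^ a) x) := by
        rw [← pow_apply_add']
        congr 2
        omega
      have h1 : ‖(T ^ i) ((T ^ a) x)‖ ≤ M * C := by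
        calc ‖(T ^ i) ((T ^ a) x)‖ ≤ M * ‖(T ^ a) x‖ := hMi i hi.1 _
          _ ≤ M * C := by nlinarith
      rw [hT] at hb
      have h2 : ‖y‖ ≤ ‖(T ^ i) ((T ^ a) x)‖ + ‖(T ^ i) ((T ^ a) x) - y‖ := by
        calc ‖y‖ = ‖(T ^ i) ((T ^ a) x) - ((T ^ i) ((T ^ a) x) - y)‖ := by
              rw [sub_sub_cancel]
          _ ≤ ‖(T ^ i) ((T ^ a) x)‖ + ‖(T ^ i) ((T ^ a) x) - y‖ := norm_sub_le _ _
      linarith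
  · -- separation within B
    intro b hb b' hb' hne'
    simp only [Set.mem_setOf_eq] at hb hb'
    by_contra hcon
    push_neg at hcon
    have key : ∀ c c' : ℕ, c < c' → ‖(T ^ c) x - y‖ < ε → ‖(T ^ c') x - y‖ < ε →
        |(c:ℤ) - (c':ℤ)| < n → False := by
      intro c c' hlt hc hc' habs
      obtain ⟨i, hidef⟩ : ∃ i : ℕ, i = c' - c := ⟨_, rfl⟩
      have hi : 1 ≤ i ∧ i < n := by
        constructor
        · omega
        · rcases abs_cases ((c:ℤ) - (c':ℤ)) with ⟨he, _⟩ | ⟨he, _⟩ <;> omega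
      have hT : (T ^ c') x = (T ^ i) ((T ^ c) x) := by
        rw [← pow_apply_add']
        congr 2
        omega
      have h1 : ‖(T ^ i) y - (T ^ i) ((T ^ c) x)‖ ≤ M * ε := by
        rw [← map_sub]
        calc ‖(T ^ i) (y - (T ^ c) x)‖ ≤ M * ‖y - (T ^ c) x‖ :=
              hMi i (by omega) _
          _ ≤ M * ε := by rw [norm_sub_rev]; nlinarith
      have h2 : ‖(T ^ i) y - y‖ ≤ ‖(T ^ i) y - (T ^ i) ((T ^ c) x)‖
          + ‖(T ^ c') x - y‖ := by
        rw [hT]; exact norm_sub_le_norm_sub_add_norm_sub _ _ _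
      have h3 := hηle i hi.1 hi.2
      have h4 : η ≤ M * ε + ε := by linarith
      have h5 : M * ε + ε = η / 2 := by rw [← hεM]; ring
      linarith
    rcases lt_trichotomy b b' with h | h | h
    · exact key b b' h hb hb' hcon
    · exact hne' h
    · exact key b' b h hb' hb (by rw [abs_sub_comm]; exact hcon)
  · -- B ∈ 𝒜
    have hball := hx (Metric.ball y ε) Metric.isOpen_ball (Metric.nonempty_ball.2 hεpos)
    have heq : {k : ℕ | (T ^ k) x ∈ Metric.ball y ε} = {m : ℕ | ‖(T ^ m) x - y‖ < ε} := by
      ext k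
      simp [Metric.mem_ball, dist_eq_norm]
    rwa [heq] at hball
end
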